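/- arXiv:1309.7580 — 7 statements merged into one kernel-verified Lean document; each statement's English description precedes it below -/
import Mathlib

section
/- Let Γ = (V; E) be a d-regular directed multigraph with n vertices, with adjacency matrix M (an n×n matrix with nonnegative integer entries whose every row sum and column sum equals d). Let θ₂ denote the second largest eigenvalue (counted with multiplicity, in decreasing order) of the symmetric positive semidefinite matrix N = Mᵀ M. Then for any sets of vertices S, T ⊆ V one has |e(S,T)·n − |S|·|T|·d| ≤ n·√(θ₂·|S|·|T|), where e(S,T) = Σ_{s∈S, t∈T} M_{st} is the number of edges in Γ from S to T. -/
/-!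
Write `1_T = (|T|/n) 𝟙 + z` with `z ⊥ 𝟙`. Since every row of `M` sums to `d`,
`e(S,T) n - |S| |T| d = n ⟪1_S, M z⟫`, and by Cauchy–Schwarz `⟪1_S, M z⟫² ≤ |S| ‖M z‖²`,
while `‖z‖² ≤ |T|`. So it suffices that `‖M z‖² = ⟪z, N z⟫ ≤ θ₂ ‖z‖²` for `z ⊥ 𝟙`.
Regularity makes `𝟙` an eigenvector of `N` for `d²`. If `θ₂ < d²`, the eigenvectors
`u₂, …, u_n` belong to smaller eigenvalues, hence are orthogonal to `𝟙`; so `𝟙` is a multiple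
of `u₁`, and `z` expands in `u₂, …, u_n` only. If `θ₂ ≥ d²`, the Schur test `‖M z‖ ≤ d ‖z‖`
already suffices.
-/

open Matrix Finset

section Orthonormal

variable {ι : Type*} [Fintype ι] [DecidableEq ι] {u : ι → ι → ℝ}

theorem eq_sum_smul_of_orthonormal (hu : ∀ i j, u i ⬝ᵥ u j = if i = j then 1 else 0)
    (v : ι → ℝ) : v = ∑ i, (v ⬝ᵥ u i) • u i := by
  have hU : Matrix.of u * (Matrix.of u)ᵀ = 1 := by
    ext i j
    simpa [Matrix.mul_apply, Matrix.one_apply, dotProduct] using hu i j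
  calc v = v ᵥ* ((Matrix.of u)ᵀ * Matrix.of u) := by rw [mul_eq_one_comm.mp hU, vecMul_one]
    _ = ∑ i, (v ⬝ᵥ u i) • u i := by
      rw [← vecMul_vecMul, vecMul_transpose, vecMul_eq_sum]
      simp only [mulVec, dotProduct_comm]
      rfl

theorem dotProduct_eq_sum_of_orthonormal (hu : ∀ i j, u i ⬝ᵥ u j = if i = j then 1 else 0)
    (v w : ι → ℝ) : v ⬝ᵥ w = ∑ i, (v ⬝ᵥ u i) * (w ⬝ᵥ u i) := by
  conv_lhs => rw [eq_sum_smul_of_orthonormal hu w]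
  simp [dotProduct_sum, dotProduct_smul, mul_comm]

variable {N : Matrix ι ι ℝ} {θ : ι → ℝ}

theorem dotProduct_mulVec_eq_sum_of_orthonormal
    (hu : ∀ i j, u i ⬝ᵥ u j = if i = j then 1 else 0) (heig : ∀ i, N *ᵥ u i = θ i • u i)
    (w v : ι → ℝ) : w ⬝ᵥ (N *ᵥ v) = ∑ i, θ i * ((w ⬝ᵥ u i) * (v ⬝ᵥ u i)) := by
  conv_lhs => rw [eq_sum_smul_of_orthonormal hu v]
  simp only [mulVec_sum, mulVec_smul, heig, dotProduct_sum, dotProduct_smul, smul_eq_mul]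
  exact sum_congr rfl fun i _ => by rw [dotProduct_comm]; ring

theorem dotProduct_eq_zero_of_eigenvalue_ne
    (hu : ∀ i j, u i ⬝ᵥ u j = if i = j then 1 else 0) (heig : ∀ i, N *ᵥ u i = θ i • u i)
    {v : ι → ℝ} {μ : ℝ} (hv : N *ᵥ v = μ • v) {i : ι} (hi : θ i ≠ μ) : v ⬝ᵥ u i = 0 := by
  have h : μ * (v ⬝ᵥ u i) = θ i * (v ⬝ᵥ u i) := by
    have := dotProduct_mulVec_eq_sum_of_orthonormal hu heig (u i) v
    rw [hv, dotProduct_smul, smul_eq_mul, dotProduct_comm] at this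
    simpa [hu, ite_mul] using this
  have h0 : (μ - θ i) * (v ⬝ᵥ u i) = 0 := by rw [sub_mul, h, sub_self]
  exact (mul_eq_zero.mp h0).resolve_left (sub_ne_zero.mpr hi.symm)

theorem dotProduct_mulVec_self_le_of_dotProduct_eigenvector_eq_zero
    (hu : ∀ i j, u i ⬝ᵥ u j = if i = j then 1 else 0) (heig : ∀ i, N *ᵥ u i = θ i • u i)
    {i₀ : ι} {μ ν : ℝ} (hθ : ∀ i ≠ i₀, θ i ≤ μ) (hμν : μ < ν) {v : ι → ℝ}
    (hv : N *ᵥ v = ν • v) (hv0 : v ≠ 0) {z : ι → ℝ} (hz : z ⬝ᵥ v = 0) :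
    z ⬝ᵥ (N *ᵥ z) ≤ μ * (z ⬝ᵥ z) := by
  have hvu : ∀ i ≠ i₀, v ⬝ᵥ u i = 0 := fun i hi =>
    dotProduct_eq_zero_of_eigenvalue_ne hu heig hv ((hθ i hi).trans_lt hμν).ne
  have hsingle : ∀ w : ι → ℝ, w ⬝ᵥ v = (w ⬝ᵥ u i₀) * (v ⬝ᵥ u i₀) := fun w => by
    rw [dotProduct_eq_sum_of_orthonormal hu,
      sum_eq_single i₀ (fun i _ hi => by rw [hvu i hi, mul_zero]) (by simp)]
  have hvi₀ : v ⬝ᵥ u i₀ ≠ 0 := fun h =>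
    hv0 (dotProduct_self_eq_zero.mp (by rw [hsingle, h, mul_zero]))
  have hzi₀ : z ⬝ᵥ u i₀ = 0 := (mul_eq_zero.mp (hsingle z ▸ hz)).resolve_right hvi₀
  calc z ⬝ᵥ (N *ᵥ z) = ∑ i, θ i * (z ⬝ᵥ u i) ^ 2 := by
        simp only [dotProduct_mulVec_eq_sum_of_orthonormal hu heig, sq]
    _ ≤ ∑ i, μ * (z ⬝ᵥ u i) ^ 2 := sum_le_sum fun i _ => by
        rcases eq_or_ne i i₀ with rfl | hi
        · simp [hzi₀]
        · exact mul_le_mul_of_nonneg_right (hθ i hi) (sq_nonneg _)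
    _ = μ * (z ⬝ᵥ z) := by
        rw [← mul_sum, dotProduct_eq_sum_of_orthonormal hu z z]
        simp only [sq]

end Orthonormal

theorem mulVec_dotProduct_mulVec_le {m n : Type*} [Fintype m] [Fintype n] {A : Matrix m n ℝ}
    {r c : ℝ} (hA : ∀ i j, 0 ≤ A i j) (hrow : ∀ i, ∑ j, A i j = r) (hcol : ∀ j, ∑ i, A i j = c)
    (z : n → ℝ) : (A *ᵥ z) ⬝ᵥ (A *ᵥ z) ≤ r * c * (z ⬝ᵥ z) :=
  calc (A *ᵥ z) ⬝ᵥ (A *ᵥ z) = ∑ i, (∑ j, A i j * z j) ^ 2 := by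
        simp only [dotProduct, mulVec, sq]
    _ ≤ ∑ i, r * ∑ j, A i j * z j ^ 2 := sum_le_sum fun i _ => by
        rw [← hrow i]
        exact sum_sq_le_sum_mul_sum_of_sq_le_mul _ (fun j _ => hA i j)
          (fun j _ => mul_nonneg (hA i j) (sq_nonneg _)) (fun j _ => (by ring : _ = _).le)
    _ = r * c * (z ⬝ᵥ z) := by
        rw [← mul_sum, sum_comm]
        simp only [← sum_mul, hcol, ← mul_sum, dotProduct, sq]
        ring

theorem abs_sum_sum_mul_card_sub_le {m n : Type*} [Fintype m] [Fintype n] [Nonempty n]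
    (A : Matrix m n ℝ) {d β : ℝ} (hrow : ∀ i, ∑ j, A i j = d) (hβ : 0 ≤ β)
    (hgap : ∀ z : n → ℝ, z ⬝ᵥ 1 = 0 → (A *ᵥ z) ⬝ᵥ (A *ᵥ z) ≤ β * (z ⬝ᵥ z))
    (S : Finset m) (T : Finset n) :
    |(∑ s ∈ S, ∑ t ∈ T, A s t) * (Fintype.card n : ℝ) - S.card * T.card * d| ≤
      (Fintype.card n : ℝ) * √(β * S.card * T.card) := by
  classical
  set k : ℝ := (Fintype.card n : ℝ)
  have hk : 0 < k := Nat.cast_pos.mpr Fintype.card_pos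
  set x : m → ℝ := fun i => if i ∈ S then 1 else 0
  set y : n → ℝ := fun j => if j ∈ T then 1 else 0
  set z : n → ℝ := y - (T.card / k) • 1 with hz
  have hx : ∀ v, x ⬝ᵥ v = ∑ i ∈ S, v i := fun v => by simp [x, dotProduct, sum_ite_mem]
  have hy : ∀ v, y ⬝ᵥ v = ∑ j ∈ T, v j := fun v => by simp [y, dotProduct, sum_ite_mem]
  have hxx : x ⬝ᵥ x = S.card := by simp [hx, x]
  have hyy : y ⬝ᵥ y = T.card := by simp [hy, y]
  have hy1 : y ⬝ᵥ 1 = T.card := by simp [hy]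
  have hz1 : z ⬝ᵥ 1 = 0 := by
    rw [hz, sub_dotProduct, smul_dotProduct, hy1, dotProduct_one, smul_eq_mul]
    simp [k, hk.ne']
  have hzz : z ⬝ᵥ z ≤ T.card :=
    calc z ⬝ᵥ z = z ⬝ᵥ y := by
          nth_rw 2 [hz]
          rw [dotProduct_sub, dotProduct_smul, hz1, smul_zero, sub_zero]
      _ = T.card - T.card / k * T.card := by
          rw [hz, sub_dotProduct, smul_dotProduct, hyy, dotProduct_comm, hy1, smul_eq_mul]
      _ ≤ T.card := sub_le_self _ (by positivity)
  have he : ∑ s ∈ S, ∑ t ∈ T, A s t = x ⬝ᵥ (A *ᵥ y) := by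
    simp only [hx, mulVec, dotProduct_comm _ y, hy]
  have hsplit : x ⬝ᵥ (A *ᵥ y) * k - S.card * T.card * d = k * (x ⬝ᵥ (A *ᵥ z)) := by
    have hxA1 : x ⬝ᵥ (A *ᵥ 1) = S.card * d := by
      simp [hx, mulVec, dotProduct_one, hrow]
    rw [show y = z + (T.card / k) • 1 by simp [z], mulVec_add, mulVec_smul, dotProduct_add,
      dotProduct_smul, hxA1, smul_eq_mul]
    field_simp
    ring
  have hCS : (x ⬝ᵥ (A *ᵥ z)) ^ 2 ≤ β * S.card * T.card :=
    calc (x ⬝ᵥ (A *ᵥ z)) ^ 2 ≤ (x ⬝ᵥ x) * ((A *ᵥ z) ⬝ᵥ (A *ᵥ z)) := by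
          simpa only [dotProduct, sq] using sum_mul_sq_le_sq_mul_sq univ x (A *ᵥ z)
      _ ≤ S.card * (β * T.card) := by
          refine mul_le_mul hxx.le ((hgap z hz1).trans ?_)
            (sum_nonneg fun _ _ => mul_self_nonneg _) (Nat.cast_nonneg _)
          exact mul_le_mul_of_nonneg_left hzz hβ
      _ = β * S.card * T.card := by ring
  rw [he, hsplit, abs_mul, abs_of_pos hk]
  exact mul_le_mul_of_nonneg_left (Real.abs_le_sqrt hCS) hk.le

theorem mulVec_dotProduct_mulVec_le_of_dotProduct_one_eq_zero {ι : Type*} [Fintype ι]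
    [DecidableEq ι] [Nonempty ι] {A : Matrix ι ι ℝ} {d : ℝ} (hA : ∀ i j, 0 ≤ A i j)
    (hrow : ∀ i, ∑ j, A i j = d) (hcol : ∀ j, ∑ i, A i j = d) {θ : ι → ℝ} {u : ι → ι → ℝ}
    (hu : ∀ i j, u i ⬝ᵥ u j = if i = j then 1 else 0)
    (heig : ∀ i, (Aᵀ * A) *ᵥ u i = θ i • u i) {i₀ : ι} {μ : ℝ} (hθ : ∀ i ≠ i₀, θ i ≤ μ)
    {z : ι → ℝ} (hz : z ⬝ᵥ 1 = 0) : (A *ᵥ z) ⬝ᵥ (A *ᵥ z) ≤ μ * (z ⬝ᵥ z) := by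
  have hzz : 0 ≤ z ⬝ᵥ z := sum_nonneg fun _ _ => mul_self_nonneg _
  rcases le_or_gt (d ^ 2) μ with hdμ | hμd
  · calc (A *ᵥ z) ⬝ᵥ (A *ᵥ z) ≤ d * d * (z ⬝ᵥ z) := mulVec_dotProduct_mulVec_le hA hrow hcol z
      _ ≤ μ * (z ⬝ᵥ z) := mul_le_mul_of_nonneg_right (by rwa [← sq]) hzz
  · have hA1 : A *ᵥ 1 = d • 1 := funext fun i => by simp [mulVec, dotProduct_one, hrow]
    have hAt1 : Aᵀ *ᵥ 1 = d • 1 := funext fun j => by simp [mulVec, dotProduct_one, hcol]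
    have hN1 : (Aᵀ * A) *ᵥ 1 = d ^ 2 • 1 := by
      rw [← mulVec_mulVec, hA1, mulVec_smul, hAt1, smul_smul, sq]
    have h := dotProduct_mulVec_self_le_of_dotProduct_eigenvector_eq_zero hu heig hθ hμd hN1
      one_ne_zero hz
    rwa [← mulVec_mulVec, dotProduct_mulVec, vecMul_transpose] at h

/-- Discrepancy inequality for a `d`-regular directed multigraph `Γ` on `n` vertices
with adjacency matrix `M`: if `θ ⟨1⟩` is the second largest eigenvalue (with
multiplicity, realized by an orthonormal eigenbasis `u`) of `N = Mᵀ M`, then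
`|e(S,T)·n − |S|·|T|·d| ≤ n·√(θ₂·|S|·|T|)` for all vertex sets `S, T`. -/
theorem stmt_3 (n d : ℕ) (hn : 2 ≤ n) (M : Matrix (Fin n) (Fin n) ℕ)
    (hrow : ∀ i, ∑ j, M i j = d)
    (hcol : ∀ j, ∑ i, M i j = d)
    (θ : Fin n → ℝ) (u : Fin n → Fin n → ℝ)
    (hmono : ∀ i j : Fin n, i ≤ j → θ j ≤ θ i)
    (hnonneg : ∀ i, 0 ≤ θ i)
    (hON : ∀ i j, dotProduct (u i) (u j) = if i = j then 1 else 0)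
    (heig : ∀ i, ((M.map (Nat.cast : ℕ → ℝ)).transpose * M.map (Nat.cast : ℕ → ℝ)).mulVec (u i)
      = θ i • u i)
    (S T : Finset (Fin n)) :
    |(∑ s ∈ S, ∑ t ∈ T, (M s t : ℝ)) * n - (S.card : ℝ) * T.card * d| ≤
      (n : ℝ) * Real.sqrt (θ ⟨1, by omega⟩ * S.card * T.card) := by
  have : NeZero n := ⟨by omega⟩
  set A : Matrix (Fin n) (Fin n) ℝ := M.map (Nat.cast : ℕ → ℝ)
  have hrowA : ∀ i, ∑ j, A i j = d := fun i => by simp [A, ← hrow i]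
  have hcolA : ∀ j, ∑ i, A i j = d := fun j => by simp [A, ← hcol j]
  have hθ : ∀ i ≠ 0, θ i ≤ θ ⟨1, by omega⟩ := fun i hi =>
    hmono _ _ (Fin.le_iff_val_le_val.mpr (Nat.one_le_iff_ne_zero.mpr (Fin.val_ne_zero_iff.mpr hi)))
  simpa [A] using abs_sum_sum_mul_card_sub_le A hrowA (hnonneg _)
    (fun z hz => mulVec_dotProduct_mulVec_le_of_dotProduct_one_eq_zero
      (fun i j => Nat.cast_nonneg (M i j)) hrowA hcolA hON heig hθ hz) S T
end

section
/- Let p be a prime, G a subgroup of the multiplicative group 𝔽_p^* = 𝔽_p \ {0}, and let g, h : G → 𝔽_p^* be arbitrary functions. Define f(x,y) = g(x)(h(x) + y) on G × 𝔽_p^* and set m = μ(g·h), where (g·h)(x) = g(x)h(x). Then for any sets A ⊆ G and B, C ⊆ 𝔽_p^*, one has |f(A,B)| · |B·C| ≥ (1/8) · min( |A|·|B|²·|C| / (p·m²), p·|B| / m ). -/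
/-!
For `(a, c) ∈ A × C`, the line `x = g(a)h(a) + (g(a)/c) y` of `𝔽_p²` passes through the `|B|`
points `(g(a)(h(a) + b), bc)`, `b ∈ B`, of `f(A, B) × B·C`; so this point set `P` has at least
`|A||B||C|` incidences with these `|A||C|` lines. A line occurs at most `m` times in the family: it
determines `g(a)h(a)`, hence `a` up to `m` choices, and then its slope determines `c`.
Since two distinct non-vertical lines meet in at most one point, the second moment of the number of
lines through a point of the plane is controlled by the coincident pairs of lines, and
Cauchy–Schwarz over `P` gives `(I - |P||A||C|/p)² ≤ |P| p |A||C| m` for the number `I` of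
incidences. Comparing with `I ≥ |A||B||C|` and solving for `|P| = |f(A,B)||B·C|` gives the bound.
-/

open Finset Pointwise

theorem sum_sub_sq_eq_sum_sq_sub {α : Type*} [Fintype α] (r : α → ℝ) {μ : ℝ}
    (hμ : ∑ z, r z = Fintype.card α * μ) :
    ∑ z, (r z - μ) ^ 2 = ∑ z, r z ^ 2 - Fintype.card α * μ ^ 2 := by
  simp only [sub_sq, sum_add_distrib, sum_sub_distrib, ← sum_mul, ← mul_sum, sum_const, card_univ,
    nsmul_eq_mul, hμ]
  ring

theorem sq_sum_sub_le_card_mul_sum_sq {α : Type*} [Fintype α] (r : α → ℝ) (μ : ℝ)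
    (P : Finset α) :
    (∑ z ∈ P, r z - #P * μ) ^ 2 ≤ #P * ∑ z, (r z - μ) ^ 2 := by
  calc (∑ z ∈ P, r z - #P * μ) ^ 2 = (∑ z ∈ P, (r z - μ)) ^ 2 := by
        rw [sum_sub_distrib, sum_const, nsmul_eq_mul]
    _ ≤ #P * ∑ z ∈ P, (r z - μ) ^ 2 := sq_sum_le_card_mul_sum_sq
    _ ≤ #P * ∑ z, (r z - μ) ^ 2 := by
        refine mul_le_mul_of_nonneg_left ?_ (Nat.cast_nonneg _)
        exact sum_le_sum_of_subset_of_nonneg (subset_univ P) fun _ _ _ => sq_nonneg _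

section Lines

variable {F : Type*} [Field F] [DecidableEq F]

/-- `ℓ = (t, λ)` encodes the non-vertical line `x = t + λ y`. -/
def OnLine (ℓ z : F × F) : Prop := z.1 = ℓ.1 + ℓ.2 * z.2

instance (ℓ : F × F) : DecidablePred (OnLine ℓ) :=
  fun z => inferInstanceAs (Decidable (z.1 = _))

def lineCount {ι : Type*} (Q : Finset ι) (L : ι → F × F) (z : F × F) : ℕ :=
  #{i ∈ Q | OnLine (L i) z}

theorem sum_lineCount {ι : Type*} (Q : Finset ι) (L : ι → F × F) (P : Finset (F × F)) :
    ∑ z ∈ P, lineCount Q L z = ∑ i ∈ Q, #{z ∈ P | OnLine (L i) z} := by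
  simp only [lineCount, card_filter]
  exact sum_comm

variable [Fintype F]

theorem card_onLine (ℓ : F × F) : #{z : F × F | OnLine ℓ z} = Fintype.card F := by
  have : ({z | OnLine ℓ z} : Finset (F × F)) = univ.image fun y => (ℓ.1 + ℓ.2 * y, y) := by
    ext ⟨x, y⟩
    simp only [mem_filter, mem_univ, true_and, mem_image, Prod.mk.injEq]
    exact ⟨fun h => ⟨y, h.symm, rfl⟩, by rintro ⟨y, rfl, rfl⟩; rfl⟩
  rw [this, card_image_of_injective _ fun y y' hyy' => congrArg Prod.snd hyy', card_univ]

theorem card_onLine_and_onLine_le_one {ℓ ℓ' : F × F} (h : ℓ ≠ ℓ') :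
    #{z : F × F | OnLine ℓ z ∧ OnLine ℓ' z} ≤ 1 := by
  obtain ⟨t, l⟩ := ℓ
  obtain ⟨t', l'⟩ := ℓ'
  rw [card_le_one]
  rintro ⟨x, y⟩ hz ⟨x', y'⟩ hz'
  simp only [mem_filter, mem_univ, true_and] at hz hz'
  obtain ⟨hz₁ : x = t + l * y, hz₂ : x = t' + l' * y⟩ := hz
  obtain ⟨hz₁' : x' = t + l * y', hz₂' : x' = t' + l' * y'⟩ := hz'
  have hl : l ≠ l' := by
    rintro rfl
    exact h (Prod.ext (by linear_combination hz₂ - hz₁) rfl)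
  -- a common point has `(l - l') y = t' - t`
  have hy : y = y' :=
    mul_left_cancel₀ (sub_ne_zero.2 hl) (by linear_combination hz₁' - hz₂' - hz₁ + hz₂)
  subst hy
  simp [hz₁, hz₁']

variable {ι : Type*} (Q : Finset ι) (L : ι → F × F)

theorem sum_lineCount_univ : ∑ z, lineCount Q L z = #Q * Fintype.card F := by
  simp [sum_lineCount, card_onLine]

theorem sum_lineCount_sq_le :
    ∑ z, lineCount Q L z ^ 2 ≤
      Fintype.card F * #{ij ∈ Q ×ˢ Q | L ij.1 = L ij.2} + #Q ^ 2 := by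
  have hsq (z : F × F) : lineCount Q L z ^ 2 =
      #{ij ∈ Q ×ˢ Q | OnLine (L ij.1) z ∧ OnLine (L ij.2) z} := by
    rw [lineCount, sq, ← card_product, ← filter_product]
  calc ∑ z, lineCount Q L z ^ 2
      = ∑ ij ∈ Q ×ˢ Q, #{z | OnLine (L ij.1) z ∧ OnLine (L ij.2) z} := by
        simp only [hsq, card_filter]
        exact sum_comm
    _ = ∑ ij ∈ Q ×ˢ Q with L ij.1 = L ij.2, #{z | OnLine (L ij.1) z ∧ OnLine (L ij.2) z} +
        ∑ ij ∈ Q ×ˢ Q with ¬ L ij.1 = L ij.2, #{z | OnLine (L ij.1) z ∧ OnLine (L ij.2) z} :=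
        (sum_filter_add_sum_filter_not _ _ _).symm
    _ ≤ ∑ ij ∈ Q ×ˢ Q with L ij.1 = L ij.2, Fintype.card F +
        ∑ ij ∈ Q ×ˢ Q with ¬ L ij.1 = L ij.2, 1 := by
        gcongr with ij _ ij hij
        · exact (card_le_card (monotone_filter_right _ fun _ _ => And.left)).trans
            (card_onLine _).le
        · exact card_onLine_and_onLine_le_one (mem_filter.1 hij).2
    _ ≤ Fintype.card F * #{ij ∈ Q ×ˢ Q | L ij.1 = L ij.2} + #Q ^ 2 := by
        rw [sum_const, sum_const, smul_eq_mul, smul_eq_mul, mul_one, mul_comm, sq,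
          ← card_product]
        gcongr
        exact filter_subset _ _

theorem sq_sum_lineCount_sub_le (P : Finset (F × F)) :
    (∑ z ∈ P, (lineCount Q L z : ℝ) - #P * #Q / Fintype.card F) ^ 2 ≤
      #P * Fintype.card F * #{ij ∈ Q ×ˢ Q | L ij.1 = L ij.2} := by
  have hq : (0 : ℝ) < Fintype.card F := by positivity
  have hmean : ∑ z, (lineCount Q L z : ℝ) =
      Fintype.card (F × F) * ((#Q : ℝ) / Fintype.card F) := by
    rw [Fintype.card_prod, ← Nat.cast_sum, sum_lineCount_univ]
    field_simp
    push_cast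
    ring
  have hsq : ∑ z, (lineCount Q L z : ℝ) ^ 2 ≤
      Fintype.card F * #{ij ∈ Q ×ˢ Q | L ij.1 = L ij.2} + #Q ^ 2 := by
    exact_mod_cast sum_lineCount_sq_le Q L
  calc (∑ z ∈ P, (lineCount Q L z : ℝ) - #P * #Q / Fintype.card F) ^ 2
      = (∑ z ∈ P, (lineCount Q L z : ℝ) - #P * ((#Q : ℝ) / Fintype.card F)) ^ 2 := by
        rw [mul_div_assoc]
    _ ≤ #P * ∑ z, ((lineCount Q L z : ℝ) - #Q / Fintype.card F) ^ 2 :=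
        sq_sum_sub_le_card_mul_sum_sq _ _ _
    _ ≤ #P * (Fintype.card F * #{ij ∈ Q ×ˢ Q | L ij.1 = L ij.2}) := by
        rw [sum_sub_sq_eq_sum_sq_sub _ hmean, Fintype.card_prod]
        gcongr
        push_cast
        field_simp
        linarith
    _ = #P * Fintype.card F * #{ij ∈ Q ×ˢ Q | L ij.1 = L ij.2} := by ring

end Lines

section ProductLines

variable {F : Type*} [Field F] (g h : F → F) {A B C : Finset F}

def lineOf (ac : F × F) : F × F := (g ac.1 * h ac.1, g ac.1 / ac.2)

theorem onLine_lineOf {a c : F} (hc : c ≠ 0) (b : F) :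
    OnLine (lineOf g h (a, c)) (g a * (h a + b), b * c) := by
  simp only [OnLine, lineOf]
  field_simp

variable [DecidableEq F]

theorem card_mul_card_mul_card_le_sum_lineCount (hC : ∀ c ∈ C, c ≠ 0) :
    #A * #B * #C ≤ ∑ z ∈ image₂ (fun x y => g x * (h x + y)) A B ×ˢ (B * C),
      lineCount (A ×ˢ C) (lineOf g h) z := by
  rw [sum_lineCount]
  calc #A * #B * #C = ∑ _ac ∈ A ×ˢ C, #B := by rw [sum_const, card_product, smul_eq_mul]; ring
    _ ≤ _ := by
      refine sum_le_sum fun ⟨a, c⟩ hac => ?_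
      obtain ⟨ha, hc⟩ := mem_product.1 hac
      refine card_le_card_of_injOn (fun b => (g a * (h a + b), b * c)) (fun b hb => ?_)
        fun b _ b' _ hbb' => mul_right_cancel₀ (hC c hc) (congrArg Prod.snd hbb')
      simp only [coe_filter, Set.mem_ofPred_eq, mem_product]
      exact ⟨⟨mem_image₂_of_mem ha hb, mul_mem_mul hb hc⟩, onLine_lineOf g h (hC c hc) b⟩

theorem card_lineOf_coincident_le {m : ℕ} (hg : ∀ a ∈ A, g a ≠ 0)
    (hfib : ∀ a ∈ A, #{a' ∈ A | g a' * h a' = g a * h a} ≤ m) :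
    #{ij ∈ (A ×ˢ C) ×ˢ (A ×ˢ C) | lineOf g h ij.1 = lineOf g h ij.2} ≤ #A * #C * m := by
  calc #{ij ∈ (A ×ˢ C) ×ˢ (A ×ˢ C) | lineOf g h ij.1 = lineOf g h ij.2}
      = ∑ i ∈ A ×ˢ C, #{j ∈ A ×ˢ C | lineOf g h i = lineOf g h j} := by
        simp only [card_filter, sum_product]
    _ ≤ ∑ _i ∈ A ×ˢ C, m := by
        refine sum_le_sum fun ⟨a, c⟩ hac => (card_le_card_of_injOn Prod.fst ?_ ?_).trans
          (hfib a (mem_product.1 hac).1)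
        · rintro ⟨a', c'⟩ hj
          simp only [coe_filter, mem_product, lineOf, Prod.mk.injEq, Set.mem_ofPred_eq] at hj ⊢
          exact ⟨hj.1.1, hj.2.1.symm⟩
        · rintro ⟨a₁, c₁⟩ hj₁ ⟨a₂, c₂⟩ hj₂ (rfl : a₁ = a₂)
          simp only [coe_filter, mem_product, lineOf, Prod.mk.injEq, Set.mem_ofPred_eq]
            at hj₁ hj₂
          have hga := hg a₁ hj₁.1.1
          rw [← div_div_cancel₀ hga (b := c₁), ← div_div_cancel₀ hga (b := c₂), ← hj₁.2.2,
            hj₂.2.2]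
    _ = #A * #C * m := by rw [sum_const, card_product, smul_eq_mul]

end ProductLines

theorem one_div_eight_mul_min_le {a b c p m x I S : ℝ} (ha : 0 ≤ a) (hb : 0 ≤ b) (hc : 0 ≤ c)
    (hp : 0 < p) (hm : 1 ≤ m) (hx : 0 ≤ x) (hI : a * b * c ≤ I) (hS : S ≤ a * c * m)
    (hinc : (I - x * (a * c) / p) ^ 2 ≤ x * p * S) :
    1 / 8 * min (a * b ^ 2 * c / (p * m ^ 2)) (p * b / m) ≤ x := by
  rcases (mul_nonneg ha hc).eq_or_lt with hac | hac
  · calc 1 / 8 * min (a * b ^ 2 * c / (p * m ^ 2)) (p * b / m)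
        ≤ 1 / 8 * (a * b ^ 2 * c / (p * m ^ 2)) := by gcongr; exact min_le_left _ _
      _ = 0 := by rw [mul_right_comm, ← hac]; simp
      _ ≤ x := hx
  by_cases hlarge : a * b * c / 2 ≤ x * (a * c) / p
  · have hx : p * b / 2 ≤ x := by
      rw [le_div_iff₀ hp] at hlarge
      rw [div_le_iff₀ two_pos]
      nlinarith
    calc 1 / 8 * min (a * b ^ 2 * c / (p * m ^ 2)) (p * b / m)
        ≤ 1 / 8 * (p * b / m) := by gcongr; exact min_le_right _ _
      _ ≤ p * b / 2 := by linarith [div_le_self (mul_nonneg hp.le hb) hm, mul_nonneg hp.le hb]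
      _ ≤ x := hx
  · push Not at hlarge
    have hsq : (a * b * c / 2) ^ 2 ≤ x * p * (a * c * m) := by
      calc (a * b * c / 2) ^ 2 ≤ (I - x * (a * c) / p) ^ 2 := by
            gcongr
            linarith
        _ ≤ x * p * S := hinc
        _ ≤ x * p * (a * c * m) := by gcongr
    have hx : a * b ^ 2 * c / (4 * p * m) ≤ x := by
      rw [div_le_iff₀ (by positivity)]
      nlinarith
    calc 1 / 8 * min (a * b ^ 2 * c / (p * m ^ 2)) (p * b / m)
        ≤ 1 / 8 * (a * b ^ 2 * c / (p * m ^ 2)) := by gcongr; exact min_le_left _ _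
      _ = a * b ^ 2 * c / (8 * p * m ^ 2) := by ring
      _ ≤ a * b ^ 2 * c / (4 * p * m) := by
        gcongr
        · norm_num
        · nlinarith
      _ ≤ x := hx

theorem stmt_4_general (p : ℕ) (hp : p.Prime)
    (G : Finset (ZMod p))
    (g h : ZMod p → ZMod p)
    (hg : ∀ x ∈ G, g x ≠ 0)
    (A B C : Finset (ZMod p))
    (hA : A ⊆ G) (hC : ∀ c ∈ C, c ≠ 0)
    (m : ℕ)
    (hm : m = (G.image fun x => g x * h x).sup
      fun t => (G.filter fun x => g x * h x = t).card) :
    ((Finset.image₂ (fun x y => g x * (h x + y)) A B).card : ℝ) * ((B * C).card : ℝ) ≥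
      (1 / 8) * min (((A.card : ℝ) * (B.card : ℝ) ^ 2 * (C.card : ℝ)) / ((p : ℝ) * (m : ℝ) ^ 2))
        (((p : ℝ) * (B.card : ℝ)) / (m : ℝ)) := by
  have : Fact p.Prime := ⟨hp⟩
  have hfib : ∀ a ∈ A, #{a' ∈ A | g a' * h a' = g a * h a} ≤ m := fun a ha =>
    hm ▸ (card_le_card (filter_subset_filter _ hA)).trans
      (le_sup (f := fun t => #{x ∈ G | g x * h x = t}) (mem_image_of_mem _ (hA ha)))
  obtain rfl | ⟨a, ha⟩ := A.eq_empty_or_nonempty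
  · simp [mul_nonpos_iff]
  have hm1 : 1 ≤ m :=
    (card_pos.2 ⟨a, by simp [ha]⟩ : 0 < #{a' ∈ A | g a' * h a' = g a * h a}).trans_le (hfib a ha)
  have hinc := sq_sum_lineCount_sub_le (A ×ˢ C) (lineOf g h)
    (image₂ (fun x y => g x * (h x + y)) A B ×ˢ (B * C))
  rw [ZMod.card, card_product, card_product] at hinc
  push_cast at hinc
  refine one_div_eight_mul_min_le (by positivity) (by positivity) (by positivity)
    (by exact_mod_cast hp.pos) (by exact_mod_cast hm1) (by positivity) ?_ ?_ hinc
  · exact_mod_cast card_mul_card_mul_card_le_sum_lineCount g h hC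
  · exact_mod_cast card_lineOf_coincident_le g h (fun a ha => hg a (hA ha)) hfib

/-- Theorem 1: for `G` a subgroup of `𝔽_p^*`, arbitrary `g, h : G → 𝔽_p^*`,
`f(x,y) = g(x)(h(x)+y)` and `m = μ(g·h)`, for all `A ⊆ G` and `B, C ⊆ 𝔽_p^*`,
`|f(A,B)|·|B·C| ≥ (1/8)·min(|A||B|²|C|/(p m²), p|B|/m)`. -/
theorem stmt_4 (p : ℕ) (hp : p.Prime)
    (G : Finset (ZMod p))
    (hG0 : (0 : ZMod p) ∉ G) (hG1 : (1 : ZMod p) ∈ G)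
    (hGmul : ∀ x ∈ G, ∀ y ∈ G, x * y ∈ G) (hGinv : ∀ x ∈ G, x⁻¹ ∈ G)
    (g h : ZMod p → ZMod p)
    (hg : ∀ x ∈ G, g x ≠ 0) (hh : ∀ x ∈ G, h x ≠ 0)
    (A B C : Finset (ZMod p))
    (hA : A ⊆ G) (hB : ∀ b ∈ B, b ≠ 0) (hC : ∀ c ∈ C, c ≠ 0)
    (m : ℕ)
    (hm : m = (G.image fun x => g x * h x).sup
      fun t => (G.filter fun x => g x * h x = t).card) :
    ((Finset.image₂ (fun x y => g x * (h x + y)) A B).card : ℝ) * ((B * C).card : ℝ) ≥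
      (1 / 8) * min (((A.card : ℝ) * (B.card : ℝ) ^ 2 * (C.card : ℝ)) / ((p : ℝ) * (m : ℝ) ^ 2))
        (((p : ℝ) * (B.card : ℝ)) / (m : ℝ)) :=
  stmt_4_general p hp G g h hg A B C hA hC m hm
end

section
/- There exists an absolute constant κ > 0 such that for every prime p and every set A ⊆ 𝔽_p^*, writing f(x,y) = x(x + y), one has max( |f(A,A)|, |A·A| ) ≥ κ · min( |A|² / √p, √(p·|A|) ). -/
/-!
Let `r(λ)` be the number of `(a, b) ∈ A²` with `a(a + b) = λ`. By Cauchy–Schwarz,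
`|A|⁴ ≤ |f(A,A)| · E` with `E = Σ r(λ)²` the number of solutions of `a(a + b) = c(c + d)`.
For fixed `a, c ≠ 0` these are the points `(b, d) ∈ A²` on the line
`d = (a/c) b + (a² - c²)/c`, and pairs with `a² ≠ c²` give pairwise distinct lines.
A second-moment count over all non-vertical lines of `𝔽_q²` (Vinh's point–line incidence bound)
gives `E ≤ |A|⁴/q + 3√q |A|²`; according to which term dominates, `|f(A,A)|` is at least
`|A|²/(6√q)` or `q/2 ≥ √(q|A|)/2`.
-/

open Finset

lemma sq_card_le_card_image_mul_sum_card_fiber {α β : Type*} [DecidableEq β]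
    (s : Finset α) (f : α → β) :
    #s ^ 2 ≤ #(s.image f) * ∑ x ∈ s, #{y ∈ s | f y = f x} := by
  have sq_fiber : ∀ c ∈ s.image f,
      #{y ∈ s | f y = c} ^ 2 = ∑ x ∈ s with f x = c, #{y ∈ s | f y = f x} := by
    intro c _
    rw [sq, ← smul_eq_mul, ← sum_const]
    exact sum_congr rfl fun x hx => by rw [(mem_filter.1 hx).2]
  calc #s ^ 2 = (∑ c ∈ s.image f, #{y ∈ s | f y = c}) ^ 2 := by rw [card_eq_sum_card_image f s]
    _ ≤ #(s.image f) * ∑ c ∈ s.image f, #{y ∈ s | f y = c} ^ 2 := sq_sum_le_card_mul_sum_sq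
    _ = _ := by
      rw [sum_congr rfl sq_fiber, sum_fiberwise_of_maps_to fun x hx => mem_image_of_mem f hx]

lemma min_le_six_mul_of_pow_four_le {a q D : ℝ} (ha : 0 ≤ a) (haq : a ≤ q) (hD : 0 ≤ D)
    (h : a ^ 4 ≤ D * (a ^ 4 / q + 3 * √q * a ^ 2)) :
    min (a ^ 2 / √q) √(q * a) ≤ 6 * D := by
  rcases ha.eq_or_lt with rfl | ha
  · simpa using hD
  have hq : 0 < q := ha.trans_le haq
  have hb : 0 < a ^ 4 / q := by positivity
  rcases le_total (a ^ 4 / q) (3 * √q * a ^ 2) with small | large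
  · refine (min_le_left _ _).trans ?_
    rw [div_le_iff₀ (Real.sqrt_pos.2 hq)]
    refine le_of_mul_le_mul_right ?_ (by positivity : 0 < a ^ 2)
    nlinarith
  · have hqD : q ≤ 2 * D := by
      refine le_of_mul_le_mul_right ?_ hb
      rw [mul_div_cancel₀ _ hq.ne']
      nlinarith
    calc min (a ^ 2 / √q) √(q * a) ≤ √(q * q) := (min_le_right _ _).trans (by gcongr)
      _ = q := Real.sqrt_mul_self hq.le
      _ ≤ 6 * D := by linarith

section FiniteField

variable {F : Type*} [Field F]

def collisionLine (a c : F) : F × F := (a / c, (a ^ 2 - c ^ 2) / c)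

lemma mul_add_eq_mul_add_iff_eq_collisionLine {a b c d : F} (hc : c ≠ 0) :
    c * (c + d) = a * (a + b) ↔ d = (collisionLine a c).1 * b + (collisionLine a c).2 := by
  simp only [collisionLine]
  constructor <;> intro h
  · field_simp
    linear_combination h
  · rw [h]
    field_simp
    ring

lemma injOn_collisionLine :
    Set.InjOn (fun ac : F × F => collisionLine ac.1 ac.2)
      {ac | ac.2 ≠ 0 ∧ ac.1 ^ 2 ≠ ac.2 ^ 2} := by
  rintro ⟨a, c⟩ ⟨hc, hac⟩ ⟨a', c'⟩ ⟨hc', -⟩ h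
  simp only [collisionLine, Prod.mk.injEq] at h hc hac hc' ⊢
  obtain ⟨hm, hk⟩ := h
  obtain ⟨m, rfl⟩ : ∃ m, a = m * c := ⟨a / c, (div_mul_cancel₀ a hc).symm⟩
  obtain rfl : a' = m * c' := by rw [← div_eq_iff hc', ← hm, mul_div_cancel_right₀ m hc]
  have hm2 : m ^ 2 - 1 ≠ 0 := fun h => hac (by linear_combination c ^ 2 * h)
  rw [show (m * c) ^ 2 - c ^ 2 = (m ^ 2 - 1) * c * c by ring,
    show (m * c') ^ 2 - c' ^ 2 = (m ^ 2 - 1) * c' * c' by ring,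
    mul_div_cancel_right₀ _ hc, mul_div_cancel_right₀ _ hc'] at hk
  have hcc : c = c' := mul_left_cancel₀ hm2 hk
  exact ⟨by rw [hcc], hcc⟩

variable [DecidableEq F]

/-- `ℓ = (m, k)` stands for the line `y = m x + k`; this counts the points of `A ×ˢ A` on it. -/
def lineIncidences (A : Finset F) (ℓ : F × F) : ℕ := #{x ∈ A | ℓ.1 * x + ℓ.2 ∈ A}

lemma sum_card_fiber_eq_sum_lineIncidences (A : Finset F) (hA : ∀ a ∈ A, a ≠ 0) :
    ∑ u ∈ A ×ˢ A, #{v ∈ A ×ˢ A | v.1 * (v.1 + v.2) = u.1 * (u.1 + u.2)} =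
      ∑ ac ∈ A ×ˢ A, lineIncidences A (collisionLine ac.1 ac.2) := by
  have fiber : ∀ a b, #{v ∈ A ×ˢ A | v.1 * (v.1 + v.2) = a * (a + b)} =
      #{c ∈ A | (collisionLine a c).1 * b + (collisionLine a c).2 ∈ A} := by
    intro a b
    rw [card_filter, card_filter, sum_product]
    refine sum_congr rfl fun c hc => ?_
    simp_rw [mul_add_eq_mul_add_iff_eq_collisionLine (hA c hc)]
    exact sum_ite_eq' A _ _
  simp only [sum_product, fiber, lineIncidences]
  exact sum_congr rfl fun a _ => sum_card_bipartiteAbove_eq_sum_card_bipartiteBelow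
    (fun (b c : F) => (collisionLine a c).1 * b + (collisionLine a c).2 ∈ A)

lemma card_filter_sq_eq_sq_le (A : Finset F) :
    #{ac ∈ A ×ˢ A | ac.1 ^ 2 = ac.2 ^ 2} ≤ 2 * #A := by
  calc #{ac ∈ A ×ˢ A | ac.1 ^ 2 = ac.2 ^ 2}
      ≤ #(A.image (fun a => (a, a)) ∪ A.image (fun a => (a, -a))) := by
        refine card_le_card fun ac hac => ?_
        simp only [mem_filter, mem_product, sq_eq_sq_iff_eq_or_eq_neg] at hac
        obtain ⟨⟨ha, -⟩, h | h⟩ := hac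
        · exact mem_union_left _ (mem_image.2 ⟨ac.1, ha, Prod.ext rfl h⟩)
        · exact mem_union_right _ (mem_image.2 ⟨ac.1, ha, Prod.ext rfl (by rw [h, neg_neg])⟩)
    _ ≤ #A + #A := (card_union_le _ _).trans (add_le_add card_image_le card_image_le)
    _ = 2 * #A := (two_mul _).symm

variable [Fintype F]

lemma card_lines_through (A : Finset F) (x : F) :
    #{ℓ : F × F | ℓ.1 * x + ℓ.2 ∈ A} = Fintype.card F * #A := by
  rw [← card_univ, ← card_product]
  refine card_nbij' (fun ℓ => (ℓ.1, ℓ.1 * x + ℓ.2)) (fun ℓ => (ℓ.1, ℓ.2 - ℓ.1 * x)) ?_ ?_ ?_ ?_ <;>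
    intro ℓ hℓ <;> simp_all

lemma card_lines_through_two (A : Finset F) {x y : F} (hxy : x ≠ y) :
    #{ℓ : F × F | ℓ.1 * x + ℓ.2 ∈ A ∧ ℓ.1 * y + ℓ.2 ∈ A} = #A ^ 2 := by
  have h : x - y ≠ 0 := sub_ne_zero.2 hxy
  rw [sq, ← card_product]
  refine card_nbij' (fun ℓ => (ℓ.1 * x + ℓ.2, ℓ.1 * y + ℓ.2))
    (fun uv => ((uv.1 - uv.2) / (x - y), uv.1 - (uv.1 - uv.2) / (x - y) * x)) ?_ ?_ ?_ ?_ <;>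
    intro ℓ hℓ
  · simpa using hℓ
  · simp only [coe_product, Set.mem_prod, mem_coe, coe_filter, mem_univ, true_and,
      Set.mem_ofPred_eq] at hℓ ⊢
    rw [show (ℓ.1 - ℓ.2) / (x - y) * x + (ℓ.1 - (ℓ.1 - ℓ.2) / (x - y) * x) = ℓ.1 by ring,
      show (ℓ.1 - ℓ.2) / (x - y) * y + (ℓ.1 - (ℓ.1 - ℓ.2) / (x - y) * x) = ℓ.2 by
        field_simp; ring]
    exact hℓ
  · ext <;> field_simp <;> ring
  · ext <;> field_simp <;> ring

lemma sum_lineIncidences (A : Finset F) :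
    ∑ ℓ, lineIncidences A ℓ = Fintype.card F * #A ^ 2 := by
  calc ∑ ℓ, lineIncidences A ℓ = ∑ x ∈ A, #{ℓ : F × F | ℓ.1 * x + ℓ.2 ∈ A} :=
        sum_card_bipartiteAbove_eq_sum_card_bipartiteBelow
          (fun (ℓ : F × F) x => ℓ.1 * x + ℓ.2 ∈ A)
    _ = Fintype.card F * #A ^ 2 := by
        simp only [card_lines_through, sum_const, smul_eq_mul]
        ring

lemma sum_lineIncidences_sq_le (A : Finset F) :
    ∑ ℓ, lineIncidences A ℓ ^ 2 ≤ Fintype.card F * #A ^ 2 + #A ^ 4 := by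
  have sq_eq : ∀ ℓ : F × F, lineIncidences A ℓ ^ 2 =
      #{xy ∈ A ×ˢ A | ℓ.1 * xy.1 + ℓ.2 ∈ A ∧ ℓ.1 * xy.2 + ℓ.2 ∈ A} := by
    intro ℓ
    rw [lineIncidences, sq, ← card_product, ← filter_product]
  have pair_le : ∀ xy ∈ A ×ˢ A, #{ℓ : F × F | ℓ.1 * xy.1 + ℓ.2 ∈ A ∧ ℓ.1 * xy.2 + ℓ.2 ∈ A} ≤
      (if xy.1 = xy.2 then Fintype.card F * #A else 0) + #A ^ 2 := by
    rintro ⟨x, y⟩ -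
    by_cases hxy : x = y
    · subst hxy
      simp [card_lines_through]
    · simp [hxy, card_lines_through_two A hxy]
  calc ∑ ℓ, lineIncidences A ℓ ^ 2
      = ∑ xy ∈ A ×ˢ A, #{ℓ : F × F | ℓ.1 * xy.1 + ℓ.2 ∈ A ∧ ℓ.1 * xy.2 + ℓ.2 ∈ A} := by
        simp_rw [sq_eq]
        exact sum_card_bipartiteAbove_eq_sum_card_bipartiteBelow
          (fun (ℓ : F × F) (xy : F × F) => ℓ.1 * xy.1 + ℓ.2 ∈ A ∧ ℓ.1 * xy.2 + ℓ.2 ∈ A)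
    _ ≤ ∑ xy ∈ A ×ˢ A, ((if xy.1 = xy.2 then Fintype.card F * #A else 0) + #A ^ 2) :=
        sum_le_sum pair_le
    _ = Fintype.card F * #A ^ 2 + #A ^ 4 := by
        rw [sum_add_distrib, sum_product]
        simp only [sum_ite_eq, sum_ite_mem, inter_self, sum_const, card_product, smul_eq_mul]
        ring

lemma sum_sub_sq_lineIncidences_le (A : Finset F) :
    ∑ ℓ : F × F, ((lineIncidences A ℓ : ℝ) - #A ^ 2 / Fintype.card F) ^ 2 ≤
      Fintype.card F * #A ^ 2 := by
  have hq : (Fintype.card F : ℝ) ≠ 0 := Nat.cast_ne_zero.2 Fintype.card_ne_zero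
  have first : ∑ ℓ : F × F, (lineIncidences A ℓ : ℝ) = Fintype.card F * #A ^ 2 := by
    exact_mod_cast sum_lineIncidences A
  have second : ∑ ℓ : F × F, (lineIncidences A ℓ : ℝ) ^ 2 ≤ Fintype.card F * #A ^ 2 + #A ^ 4 := by
    exact_mod_cast sum_lineIncidences_sq_le A
  simp only [sub_sq, sum_add_distrib, sum_sub_distrib, ← sum_mul, ← mul_sum, first, sum_const,
    card_univ, Fintype.card_prod, nsmul_eq_mul]
  push_cast
  field_simp
  nlinarith

lemma sum_lineIncidences_le (A : Finset F) (L : Finset (F × F)) :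
    ∑ ℓ ∈ L, (lineIncidences A ℓ : ℝ) ≤
      #L * #A ^ 2 / Fintype.card F + √(Fintype.card F * #A ^ 2 * #L) := by
  set t : ℝ := #A ^ 2 / Fintype.card F
  have deviation : ∑ ℓ ∈ L, ((lineIncidences A ℓ : ℝ) - t) ≤ √(Fintype.card F * #A ^ 2 * #L) := by
    apply Real.le_sqrt_of_sq_le
    calc (∑ ℓ ∈ L, ((lineIncidences A ℓ : ℝ) - t)) ^ 2
        ≤ #L * ∑ ℓ ∈ L, ((lineIncidences A ℓ : ℝ) - t) ^ 2 := sq_sum_le_card_mul_sum_sq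
      _ ≤ #L * ∑ ℓ, ((lineIncidences A ℓ : ℝ) - t) ^ 2 := by
        gcongr
        exact subset_univ L
      _ ≤ #L * (Fintype.card F * #A ^ 2) := by
        gcongr
        exact sum_sub_sq_lineIncidences_le A
      _ = Fintype.card F * #A ^ 2 * #L := by ring
  have split : ∑ ℓ ∈ L, (lineIncidences A ℓ : ℝ) =
      ∑ ℓ ∈ L, ((lineIncidences A ℓ : ℝ) - t) + #L * t := by
    rw [sum_sub_distrib, sum_const, nsmul_eq_mul]
    ring
  rw [split, mul_div_assoc]
  linarith

lemma sum_lineIncidences_collisionLine_le (A : Finset F) (hA : ∀ a ∈ A, a ≠ 0) :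
    ∑ ac ∈ A ×ˢ A, (lineIncidences A (collisionLine ac.1 ac.2) : ℝ) ≤
      #A ^ 4 / Fintype.card F + 3 * √(Fintype.card F) * #A ^ 2 := by
  set φ := fun ac : F × F => collisionLine ac.1 ac.2
  set T := {ac ∈ A ×ˢ A | ac.1 ^ 2 ≠ ac.2 ^ 2}
  have hq : (1 : ℝ) ≤ √(Fintype.card F) :=
    Real.one_le_sqrt.2 (by exact_mod_cast Fintype.card_pos)
  have hT : (#T : ℝ) ≤ #A ^ 2 := by
    exact_mod_cast (card_filter_le _ _).trans_eq (by rw [card_product, sq])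
  have degenerate : ∑ ac ∈ A ×ˢ A with ac.1 ^ 2 = ac.2 ^ 2, (lineIncidences A (φ ac) : ℝ) ≤
      2 * #A ^ 2 := by
    calc _ ≤ ∑ ac ∈ A ×ˢ A with ac.1 ^ 2 = ac.2 ^ 2, (#A : ℝ) :=
          sum_le_sum fun ac _ => by exact_mod_cast card_filter_le _ _
      _ ≤ 2 * #A ^ 2 := by
          rw [sum_const, nsmul_eq_mul, sq, ← mul_assoc]
          gcongr
          exact_mod_cast card_filter_sq_eq_sq_le A
  have generic : ∑ ac ∈ T, (lineIncidences A (φ ac) : ℝ) ≤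
      #A ^ 4 / Fintype.card F + √(Fintype.card F) * #A ^ 2 := by
    have hinj : Set.InjOn φ T := injOn_collisionLine.mono fun ac hac => by
      simp only [T, coe_filter, mem_product, Set.mem_ofPred_eq] at hac
      exact ⟨hA _ hac.1.2, hac.2⟩
    rw [← sum_image (f := fun ℓ => (lineIncidences A ℓ : ℝ)) hinj]
    refine (sum_lineIncidences_le A _).trans ?_
    rw [card_image_of_injOn hinj]
    gcongr
    · calc (#T : ℝ) * #A ^ 2 ≤ (#A : ℝ) ^ 2 * #A ^ 2 := by gcongr
        _ = (#A : ℝ) ^ 4 := by ring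
    · calc √(Fintype.card F * #A ^ 2 * #T) ≤ √(Fintype.card F * (#A ^ 2) ^ 2) := by
            rw [sq (_ ^ 2), ← mul_assoc]
            gcongr
        _ = √(Fintype.card F) * #A ^ 2 := by
            rw [Real.sqrt_mul (Nat.cast_nonneg _), Real.sqrt_sq (by positivity)]
  rw [← sum_filter_add_sum_filter_not (A ×ˢ A) (fun ac => ac.1 ^ 2 = ac.2 ^ 2)]
  nlinarith

theorem min_le_six_mul_card_image₂_mul_add (A : Finset F) (hA : ∀ a ∈ A, a ≠ 0) :
    min ((#A : ℝ) ^ 2 / √(Fintype.card F)) √(Fintype.card F * #A) ≤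
      6 * #(image₂ (fun x y => x * (x + y)) A A) := by
  have cauchySchwarz : #A ^ 4 ≤ #(image₂ (fun x y => x * (x + y)) A A) *
      ∑ ac ∈ A ×ˢ A, lineIncidences A (collisionLine ac.1 ac.2) := by
    have := sq_card_le_card_image_mul_sum_card_fiber (A ×ˢ A) fun u : F × F => u.1 * (u.1 + u.2)
    rwa [card_product, ← sq, ← pow_mul, sum_card_fiber_eq_sum_lineIncidences A hA] at this
  refine min_le_six_mul_of_pow_four_le (Nat.cast_nonneg _) (by exact_mod_cast card_le_univ A)
    (Nat.cast_nonneg _) ?_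
  calc (#A : ℝ) ^ 4 ≤ #(image₂ (fun x y => x * (x + y)) A A) *
        ∑ ac ∈ A ×ˢ A, (lineIncidences A (collisionLine ac.1 ac.2) : ℝ) := by
        exact_mod_cast cauchySchwarz
    _ ≤ _ := by
        gcongr
        exact sum_lineIncidences_collisionLine_le A hA

end FiniteField

open Pointwise

/-- Corollary: for `f(x,y) = x(x+y)` and any `A ⊆ 𝔽_p^*`,
`max(|f(A,A)|, |A·A|) ≫ min(|A|²/√p, √(p|A|))`. -/
theorem stmt_6 : ∃ κ : ℝ, 0 < κ ∧ ∀ (p : ℕ), p.Prime →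
    ∀ A : Finset (ZMod p), (∀ a ∈ A, a ≠ 0) →
      max ((Finset.image₂ (fun x y => x * (x + y)) A A).card : ℝ) ((A * A).card : ℝ) ≥
        κ * min ((A.card : ℝ) ^ 2 / Real.sqrt p) (Real.sqrt ((p : ℝ) * A.card)) := by
  refine ⟨1 / 6, by norm_num, fun p hp A hA => ?_⟩
  have : Fact p.Prime := ⟨hp⟩
  have key := min_le_six_mul_card_image₂_mul_add A hA
  rw [ZMod.card] at key
  exact le_max_of_le_left (by linarith)
end

section
/- There exists an absolute constant κ > 0 such that for every prime p and every set A ⊆ 𝔽_p^*, writing f(x,y) = x(x² + y²), one has max( |f(A,A)|, |A·A| ) ≥ κ · min( |A|² / √p, √(p·|A|) ). -/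
open Finset Polynomial Pointwise

def fxy {p : ℕ} : ZMod p × ZMod p → ZMod p := fun w => w.1 * (w.1 ^ 2 + w.2 ^ 2)

section Helpers

lemma card_le_four_of_subset {γ : Type*} [DecidableEq γ] {s : Finset γ} {a b c d : γ}
    (h : s ⊆ {a, b, c, d}) : s.card ≤ 4 := by
  calc s.card ≤ ({a, b, c, d} : Finset γ).card := Finset.card_le_card h
    _ ≤ ({b, c, d} : Finset γ).card + 1 := Finset.card_insert_le _ _
    _ ≤ (({c, d} : Finset γ).card + 1) + 1 := by
        exact Nat.add_le_add_right (Finset.card_insert_le _ _) 1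
    _ ≤ ((({d} : Finset γ).card + 1) + 1) + 1 := by
        exact Nat.add_le_add_right (Nat.add_le_add_right (Finset.card_insert_le _ _) 1) 1
    _ ≤ 4 := by simp

lemma card_le_two_of_subset {γ : Type*} [DecidableEq γ] {s : Finset γ} {a b : γ}
    (h : s ⊆ {a, b}) : s.card ≤ 2 := by
  calc s.card ≤ ({a, b} : Finset γ).card := Finset.card_le_card h
    _ ≤ ({b} : Finset γ).card + 1 := Finset.card_insert_le _ _
    _ ≤ 2 := by simp

lemma sum_comp_le_of_fiber_le {α β : Type*} [DecidableEq β] [Fintype β] (G : Finset α)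
    (φ : α → β) (F : β → ℝ) (hF : ∀ b, 0 ≤ F b) (k : ℕ)
    (hfib : ∀ b, (G.filter (fun g => φ g = b)).card ≤ k) :
    ∑ g ∈ G, F (φ g) ≤ k * ∑ b : β, F b := by
  rw [← Finset.sum_fiberwise_of_maps_to (fun g _ => Finset.mem_univ (φ g)) (fun g => F (φ g))]
  rw [Finset.mul_sum]
  apply Finset.sum_le_sum
  intro b _
  have heq : ∑ g ∈ G.filter (fun g => φ g = b), F (φ g)
      = ((G.filter (fun g => φ g = b)).card : ℝ) * F b := by
    rw [Finset.sum_congr rfl (fun g hg => by rw [(Finset.mem_filter.mp hg).2]),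
      Finset.sum_const, nsmul_eq_mul]
  rw [heq]
  exact mul_le_mul_of_nonneg_right (by exact_mod_cast hfib b) (hF b)

variable {p : ℕ} [Fact p.Prime]

lemma card_filter_pow_le (n : ℕ) (hn : 0 < n) (a : ZMod p) (B : Finset (ZMod p)) :
    (B.filter (fun t => t ^ n = a)).card ≤ n := by
  have hsub : (B.filter (fun t => t ^ n = a)) ⊆ (Polynomial.nthRoots n a).toFinset := by
    intro t ht
    rw [Multiset.mem_toFinset, Polynomial.mem_nthRoots hn]
    exact (Finset.mem_filter.mp ht).2
  calc (B.filter (fun t => t ^ n = a)).card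
      ≤ (Polynomial.nthRoots n a).toFinset.card := Finset.card_le_card hsub
    _ ≤ Multiset.card (Polynomial.nthRoots n a) := Multiset.toFinset_card_le _
    _ ≤ n := Polynomial.card_nthRoots n a

lemma sq_cases {x y : ZMod p} (h : x ^ 2 = y ^ 2) : x = y ∨ x = -y := by
  have h0 : (x - y) * (x + y) = 0 := by linear_combination h
  rcases mul_eq_zero.mp h0 with h' | h'
  · exact Or.inl (sub_eq_zero.mp h')
  · exact Or.inr (eq_neg_of_add_eq_zero_left h')


def nuF (P : Finset (ZMod p × ZMod p)) (mc : ZMod p × ZMod p) : ℕ :=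
  (P.filter (fun q => q.1 = mc.1 * q.2 + mc.2)).card

lemma card_line_through (q : ZMod p × ZMod p) :
    ((univ : Finset (ZMod p × ZMod p)).filter
      (fun mc => q.1 = mc.1 * q.2 + mc.2)).card = p := by
  have h : (univ : Finset (ZMod p × ZMod p)).filter (fun mc => q.1 = mc.1 * q.2 + mc.2)
      = (univ : Finset (ZMod p)).image (fun m => (m, q.1 - m * q.2)) := by
    ext mc
    simp only [mem_filter, mem_univ, true_and, mem_image]
    constructor
    · intro h
      exact ⟨mc.1, by rw [Prod.ext_iff]; exact ⟨rfl, by rw [h]; ring⟩⟩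
    · rintro ⟨m, rfl⟩
      ring
  rw [h, Finset.card_image_of_injective _ (fun a b hab => (Prod.ext_iff.mp hab).1),
    Finset.card_univ, ZMod.card]

lemma sum_nuF (P : Finset (ZMod p × ZMod p)) :
    ∑ mc : ZMod p × ZMod p, nuF P mc = p * P.card := by
  unfold nuF
  simp_rw [Finset.card_filter]
  rw [Finset.sum_comm]
  have h : ∀ q : ZMod p × ZMod p,
      (∑ mc : ZMod p × ZMod p, if q.1 = mc.1 * q.2 + mc.2 then 1 else 0) = p := by
    intro q
    rw [← Finset.card_filter]
    exact card_line_through q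
  rw [Finset.sum_congr rfl (fun q _ => h q), Finset.sum_const, smul_eq_mul, mul_comm]

lemma card_two_lines_le {q q' : ZMod p × ZMod p} (hqq : q ≠ q') :
    ((univ : Finset (ZMod p × ZMod p)).filter
      (fun mc => q.1 = mc.1 * q.2 + mc.2 ∧ q'.1 = mc.1 * q'.2 + mc.2)).card ≤ 1 := by
  apply Finset.card_le_one.mpr
  intro mc hmc mc' hmc'
  simp only [mem_filter, mem_univ, true_and] at hmc hmc'
  obtain ⟨h1, h2⟩ := hmc
  obtain ⟨h3, h4⟩ := hmc'
  by_cases hv : q.2 = q'.2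
  · exfalso
    apply hqq
    have : q.1 = q'.1 := by linear_combination h1 - h2 + mc.1 * hv
    exact Prod.ext this hv
  · have hm : mc.1 = mc'.1 := by
      have hne : q.2 - q'.2 ≠ 0 := sub_ne_zero.mpr hv
      have : (mc.1 - mc'.1) * (q.2 - q'.2) = 0 := by linear_combination h3 + h2 - h1 - h4
      rcases mul_eq_zero.mp this with h | h
      · exact sub_eq_zero.mp h
      · exact absurd h hne
    have hc : mc.2 = mc'.2 := by linear_combination h3 - h1 - q.2 * hm
    exact Prod.ext hm hc

lemma sum_sq_nuF (P : Finset (ZMod p × ZMod p)) :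
    ∑ mc : ZMod p × ZMod p, (nuF P mc) ^ 2 ≤ p * P.card + P.card ^ 2 := by
  have hsq : ∀ mc : ZMod p × ZMod p, (nuF P mc) ^ 2 =
      ((P ×ˢ P).filter (fun qq =>
        qq.1.1 = mc.1 * qq.1.2 + mc.2 ∧ qq.2.1 = mc.1 * qq.2.2 + mc.2)).card := by
    intro mc
    have hset : (P ×ˢ P).filter (fun qq =>
        qq.1.1 = mc.1 * qq.1.2 + mc.2 ∧ qq.2.1 = mc.1 * qq.2.2 + mc.2)
        = (P.filter (fun q => q.1 = mc.1 * q.2 + mc.2)) ×ˢ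
          (P.filter (fun q => q.1 = mc.1 * q.2 + mc.2)) := by
      ext qq
      simp only [Finset.mem_filter, Finset.mem_product]
      tauto
    rw [hset, Finset.card_product]
    unfold nuF; ring
  calc ∑ mc : ZMod p × ZMod p, (nuF P mc) ^ 2
      = ∑ qq ∈ P ×ˢ P, ((univ : Finset (ZMod p × ZMod p)).filter
          (fun mc => qq.1.1 = mc.1 * qq.1.2 + mc.2 ∧ qq.2.1 = mc.1 * qq.2.2 + mc.2)).card := by
        simp_rw [hsq, Finset.card_filter]
        rw [Finset.sum_comm]
    _ ≤ ∑ qq ∈ P ×ˢ P, (if qq.1 = qq.2 then p else 1) := by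
        apply Finset.sum_le_sum
        intro qq _
        by_cases h : qq.1 = qq.2
        · simp only [h, if_pos, and_self]
          exact le_of_eq (card_line_through qq.2)
        · simp only [h, if_neg, if_false]
          exact card_two_lines_le h
    _ ≤ p * P.card + P.card ^ 2 := by
        rw [Finset.sum_ite]
        have h1 : ((P ×ˢ P).filter (fun qq => qq.1 = qq.2)).card ≤ P.card := by
          apply Finset.card_le_card_of_injOn (fun qq => qq.1)
          · intro qq hqq
            exact (Finset.mem_product.mp (Finset.mem_filter.mp hqq).1).1
          · intro a ha b hb hab
            have ha' := (Finset.mem_filter.mp ha).2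
            have hb' := (Finset.mem_filter.mp hb).2
            have hab' : a.1 = b.1 := hab
            exact Prod.ext hab' (by rw [← ha', ← hb']; exact hab')
        have h2 : ((P ×ˢ P).filter (fun qq => ¬ qq.1 = qq.2)).card ≤ P.card ^ 2 := by
          calc _ ≤ (P ×ˢ P).card := Finset.card_le_card (Finset.filter_subset _ _)
            _ = P.card ^ 2 := by rw [Finset.card_product]; ring
        rw [Finset.sum_const, Finset.sum_const, smul_eq_mul, smul_eq_mul, mul_one]
        calc ((P ×ˢ P).filter (fun qq => qq.1 = qq.2)).card * p +
              ((P ×ˢ P).filter (fun qq => ¬ qq.1 = qq.2)).card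
            ≤ P.card * p + P.card ^ 2 := Nat.add_le_add (Nat.mul_le_mul_right p h1) h2
          _ = p * P.card + P.card ^ 2 := by rw [Nat.mul_comm]

lemma sum_sq_dev (P : Finset (ZMod p × ZMod p)) :
    ∑ mc : ZMod p × ZMod p, ((nuF P mc : ℝ) - P.card / p) ^ 2 ≤ p * P.card := by
  have hp0 : (0:ℝ) < p := by
    exact_mod_cast Nat.pos_of_ne_zero (Fact.out (p := p.Prime)).ne_zero
  have hcard : (Finset.univ : Finset (ZMod p × ZMod p)).card = p * p := by
    rw [Finset.card_univ, Fintype.card_prod, ZMod.card]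
  have h1 : ∑ mc : ZMod p × ZMod p, (nuF P mc : ℝ) = p * P.card := by
    exact_mod_cast congrArg (Nat.cast : ℕ → ℝ) (sum_nuF P)
  have h2 : ∑ mc : ZMod p × ZMod p, (nuF P mc : ℝ) ^ 2 ≤ p * P.card + (P.card : ℝ) ^ 2 := by
    exact_mod_cast sum_sq_nuF P
  have expand : ∀ x : ℝ, (x - (P.card : ℝ) / p) ^ 2
      = x ^ 2 - 2 * ((P.card : ℝ)/p) * x + ((P.card : ℝ)/p) ^ 2 := by intro x; ring
  simp_rw [expand]
  rw [Finset.sum_add_distrib, Finset.sum_sub_distrib, ← Finset.mul_sum, Finset.sum_const,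
    hcard, h1, nsmul_eq_mul]
  have e1 : 2 * ((P.card:ℝ)/p) * ((p:ℝ) * P.card) = 2 * (P.card:ℝ)^2 := by
    field_simp
  have e2 : ((p:ℝ) * p : ℝ) * ((P.card:ℝ)/p)^2 = (P.card:ℝ)^2 := by
    field_simp
  push_cast
  push_cast at e2 h1 h2
  nlinarith [h2]

set_option maxHeartbeats 1000000 in
theorem energy_bound (A : Finset (ZMod p)) (hA : ∀ a ∈ A, a ≠ 0) :
    ((((A ×ˢ A) ×ˢ (A ×ˢ A)).filter (fun w => fxy w.1 = fxy w.2)).card : ℝ)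
      ≤ 4 * (A.card : ℝ) ^ 4 / p + 12 * (A.card : ℝ) ^ 2 * Real.sqrt p := by
  classical
  have hp2 : 2 ≤ p := (Fact.out (p := p.Prime)).two_le
  have hp0 : (0:ℝ) < p := by exact_mod_cast Nat.lt_of_lt_of_le Nat.zero_lt_two hp2
  have hsp1 : (1:ℝ) ≤ Real.sqrt p := by
    rw [show (1:ℝ) = Real.sqrt 1 by simp]
    exact Real.sqrt_le_sqrt (by exact_mod_cast Nat.one_le_of_lt hp2)
  set a : ℝ := (A.card : ℝ) with ha
  have ha0 : 0 ≤ a := by positivity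
  set D := A ×ˢ A with hD
  have hDa : (D.card : ℝ) = a ^ 2 := by
    rw [hD, Finset.card_product, ha]; push_cast; ring
  set T := (D ×ˢ D).filter (fun w => fxy w.1 = fxy w.2) with hT
  set P := D.image (fun v => (v.1 ^ 2, v.2 ^ 2)) with hP
  have hPcard : (P.card : ℝ) ≤ a ^ 2 := by
    rw [← hDa]
    exact_mod_cast Finset.card_image_le
  have hPc0 : (0:ℝ) ≤ (P.card : ℝ) := by positivity
  -- split energy
  set Tsp := T.filter (fun w => w.2.1 ^ 3 = w.1.1 ^ 3) with hTsp
  set Tgen := T.filter (fun w => ¬ w.2.1 ^ 3 = w.1.1 ^ 3) with hTgen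
  have hsplit : Tsp.card + Tgen.card = T.card :=
    Finset.card_filter_add_card_filter_not _
  -- special part
  have hTspD : ∀ w ∈ Tsp, w.1 ∈ D := by
    intro w hw
    exact (Finset.mem_product.mp (Finset.mem_filter.mp (Finset.mem_filter.mp hw).1).1).1
  have hsp : Tsp.card ≤ 6 * D.card := by
    apply Finset.card_le_mul_card_image_of_maps_to hTspD
    intro d _
    set U := D.filter (fun v => fxy v = fxy d ∧ v.1 ^ 3 = d.1 ^ 3) with hU
    have hinj : (Tsp.filter (fun w => w.1 = d)).card ≤ U.card := by
      apply Finset.card_le_card_of_injOn (fun w => w.2)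
      · intro w hw
        obtain ⟨hwT, hw1⟩ := Finset.mem_filter.mp hw
        obtain ⟨hwT', hcube⟩ := Finset.mem_filter.mp hwT
        obtain ⟨hmem, heq⟩ := Finset.mem_filter.mp hwT'
        refine Finset.mem_filter.mpr ⟨(Finset.mem_product.mp hmem).2, ?_, ?_⟩
        · rw [← heq, hw1]
        · rw [hcube, hw1]
      · intro w hw w' hw' h2
        have e1 : w.1 = d := (Finset.mem_filter.mp hw).2
        have e1' : w'.1 = d := (Finset.mem_filter.mp hw').2
        exact Prod.ext (e1.trans e1'.symm) h2
    have hU6 : U.card ≤ 6 := by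
      have hmapsU : ∀ v ∈ U, v.1 ∈ A.filter (fun t => t ^ 3 = d.1 ^ 3) := by
        intro v hv
        obtain ⟨hvD, _, hc⟩ := Finset.mem_filter.mp hv
        exact Finset.mem_filter.mpr ⟨(Finset.mem_product.mp hvD).1, hc⟩
      have hkey := Finset.card_le_mul_card_image_of_maps_to hmapsU 2 ?_
      · calc U.card ≤ 2 * (A.filter (fun t => t ^ 3 = d.1 ^ 3)).card := hkey
          _ ≤ 2 * 3 := Nat.mul_le_mul_left 2 (card_filter_pow_le 3 (by norm_num) _ _)
          _ = 6 := rfl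
      · intro x' hx'
        have hx'A : x' ∈ A := (Finset.mem_filter.mp hx').1
        have hx'0 : x' ≠ 0 := hA x' hx'A
        apply le_trans ?_ (card_filter_pow_le 2 (by norm_num) (fxy d * x'⁻¹ - x' ^ 2) A)
        apply Finset.card_le_card_of_injOn (fun v => v.2)
        · intro v hv
          obtain ⟨hvU, hv1⟩ := Finset.mem_filter.mp hv
          obtain ⟨hvD, hfv, _⟩ := Finset.mem_filter.mp hvU
          refine Finset.mem_filter.mpr ⟨(Finset.mem_product.mp hvD).2, ?_⟩
          have hthis : v.1 * (v.1 ^ 2 + v.2 ^ 2) = fxy d := hfv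
          rw [hv1] at hthis
          field_simp
          linear_combination hthis
        · intro v hv v' hv' h2
          have e1 : v.1 = x' := (Finset.mem_filter.mp hv).2
          have e1' : v'.1 = x' := (Finset.mem_filter.mp hv').2
          exact Prod.ext (e1.trans e1'.symm) h2
    exact le_trans hinj hU6
  -- generic part
  set G := (A ×ˢ A).filter (fun g => ¬ g.2 ^ 3 = g.1 ^ 3) with hG
  set φ : ZMod p × ZMod p → ZMod p × ZMod p :=
    fun g => (g.2 * g.1⁻¹, (g.2 ^ 3 - g.1 ^ 3) * g.1⁻¹) with hφ
  have hmapsG : ∀ w ∈ Tgen, (w.1.1, w.2.1) ∈ G := by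
    intro w hw
    obtain ⟨hwT, hcube⟩ := Finset.mem_filter.mp hw
    obtain ⟨hmem, _⟩ := Finset.mem_filter.mp hwT
    obtain ⟨h1, h2⟩ := Finset.mem_product.mp hmem
    exact Finset.mem_filter.mpr ⟨Finset.mem_product.mpr
      ⟨(Finset.mem_product.mp h1).1, (Finset.mem_product.mp h2).1⟩, hcube⟩
  have hfib4 : ∀ g ∈ G, (Tgen.filter (fun w => (w.1.1, w.2.1) = g)).card ≤ 4 * nuF P (φ g) := by
    intro g hg
    have hg1A : g.1 ∈ A := (Finset.mem_product.mp (Finset.mem_filter.mp hg).1).1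
    have hg10 : g.1 ≠ 0 := hA _ hg1A
    have hnu : nuF P (φ g) = (P.filter (fun q => q.1 = (φ g).1 * q.2 + (φ g).2)).card := rfl
    rw [hnu]
    apply Finset.card_le_mul_card_image_of_maps_to (f := fun w => (w.1.2 ^ 2, w.2.2 ^ 2))
    · intro w hw
      obtain ⟨hwTgen, hΦ⟩ := Finset.mem_filter.mp hw
      obtain ⟨hwT, hcube⟩ := Finset.mem_filter.mp hwTgen
      obtain ⟨hmem, heq⟩ := Finset.mem_filter.mp hwT
      obtain ⟨h1, h2⟩ := Finset.mem_product.mp hmem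
      have hy : w.1.2 ∈ A := (Finset.mem_product.mp h1).2
      have hy' : w.2.2 ∈ A := (Finset.mem_product.mp h2).2
      refine Finset.mem_filter.mpr ⟨?_, ?_⟩
      · rw [hP]
        have hyy : ((w.1.2, w.2.2) : ZMod p × ZMod p) ∈ A ×ˢ A :=
          Finset.mem_product.mpr ⟨hy, hy'⟩
        exact Finset.mem_image_of_mem (fun v => (v.1 ^ 2, v.2 ^ 2)) hyy
      · have hx : w.1.1 = g.1 := (Prod.ext_iff.mp hΦ).1
        have hx' : w.2.1 = g.2 := (Prod.ext_iff.mp hΦ).2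
        have heq' : w.1.1 * (w.1.1 ^ 2 + w.1.2 ^ 2) = w.2.1 * (w.2.1 ^ 2 + w.2.2 ^ 2) := heq
        rw [hx, hx'] at heq'
        show w.1.2 ^ 2 = g.2 * g.1⁻¹ * w.2.2 ^ 2 + (g.2 ^ 3 - g.1 ^ 3) * g.1⁻¹
        field_simp
        linear_combination heq'
    · intro b _
      rcases Finset.eq_empty_or_nonempty
        ((Tgen.filter (fun w => (w.1.1, w.2.1) = g)).filter
          (fun w => (w.1.2 ^ 2, w.2.2 ^ 2) = b)) with hemp | ⟨w₀, hw₀⟩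
      · rw [hemp]; simp
      · apply card_le_four_of_subset (a := w₀) (b := ((w₀.1.1, -w₀.1.2), w₀.2))
          (c := (w₀.1, (w₀.2.1, -w₀.2.2))) (d := ((w₀.1.1, -w₀.1.2), (w₀.2.1, -w₀.2.2)))
        intro w hw
        obtain ⟨hw1, hwb⟩ := Finset.mem_filter.mp hw
        obtain ⟨_, hwg⟩ := Finset.mem_filter.mp hw1
        obtain ⟨hw01, hw0b⟩ := Finset.mem_filter.mp hw₀
        obtain ⟨_, hw0g⟩ := Finset.mem_filter.mp hw01
        have ex : w.1.1 = w₀.1.1 :=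
          ((Prod.ext_iff.mp hwg).1).trans ((Prod.ext_iff.mp hw0g).1).symm
        have ex' : w.2.1 = w₀.2.1 :=
          ((Prod.ext_iff.mp hwg).2).trans ((Prod.ext_iff.mp hw0g).2).symm
        have ey : w.1.2 ^ 2 = w₀.1.2 ^ 2 :=
          ((Prod.ext_iff.mp hwb).1).trans ((Prod.ext_iff.mp hw0b).1).symm
        have ey' : w.2.2 ^ 2 = w₀.2.2 ^ 2 :=
          ((Prod.ext_iff.mp hwb).2).trans ((Prod.ext_iff.mp hw0b).2).symm
        rcases sq_cases ey with e1 | e1 <;> rcases sq_cases ey' with e2 | e2 <;>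
          simp only [Finset.mem_insert, Finset.mem_singleton]
        · exact Or.inl (Prod.ext (Prod.ext ex e1) (Prod.ext ex' e2))
        · exact Or.inr (Or.inr (Or.inl (Prod.ext (Prod.ext ex e1) (Prod.ext ex' e2))))
        · exact Or.inr (Or.inl (Prod.ext (Prod.ext ex e1) (Prod.ext ex' e2)))
        · exact Or.inr (Or.inr (Or.inr (Prod.ext (Prod.ext ex e1) (Prod.ext ex' e2))))
  have hfib2 : ∀ b, (G.filter (fun g => φ g = b)).card ≤ 2 := by
    intro b
    rcases Finset.eq_empty_or_nonempty (G.filter (fun g => φ g = b)) with hemp | ⟨g₀, hg₀⟩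
    · rw [hemp]; simp
    · apply card_le_two_of_subset (a := g₀) (b := (-g₀.1, -g₀.2))
      intro g hg
      obtain ⟨hgG, hgφ⟩ := Finset.mem_filter.mp hg
      obtain ⟨hg0G, hg0φ⟩ := Finset.mem_filter.mp hg₀
      have hg1 : g.1 ≠ 0 := hA _ (Finset.mem_product.mp (Finset.mem_filter.mp hgG).1).1
      have hg01 : g₀.1 ≠ 0 := hA _ (Finset.mem_product.mp (Finset.mem_filter.mp hg0G).1).1
      have hgc : ¬ g.2 ^ 3 = g.1 ^ 3 := (Finset.mem_filter.mp hgG).2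
      have hm : g.2 * g.1⁻¹ = b.1 := (Prod.ext_iff.mp hgφ).1
      have hc : (g.2 ^ 3 - g.1 ^ 3) * g.1⁻¹ = b.2 := (Prod.ext_iff.mp hgφ).2
      have hm0 : g₀.2 * g₀.1⁻¹ = b.1 := (Prod.ext_iff.mp hg0φ).1
      have hc0 : (g₀.2 ^ 3 - g₀.1 ^ 3) * g₀.1⁻¹ = b.2 := (Prod.ext_iff.mp hg0φ).2
      have hg2 : g.2 = b.1 * g.1 := by
        field_simp at hm; linear_combination hm
      have hg02 : g₀.2 = b.1 * g₀.1 := by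
        field_simp at hm0; linear_combination hm0
      have hb2 : b.2 = (b.1 ^ 3 - 1) * g.1 ^ 2 := by
        rw [← hc, hg2]; field_simp
      have hb20 : b.2 = (b.1 ^ 3 - 1) * g₀.1 ^ 2 := by
        rw [← hc0, hg02]; field_simp
      have hm3 : b.1 ^ 3 - 1 ≠ 0 := by
        intro h
        apply hgc
        have hb1 : b.1 ^ 3 = 1 := by linear_combination h
        rw [hg2, mul_pow, hb1, one_mul]
      have hsq : g.1 ^ 2 = g₀.1 ^ 2 := mul_left_cancel₀ hm3 (by rw [← hb2, ← hb20])
      simp only [Finset.mem_insert, Finset.mem_singleton]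
      rcases sq_cases hsq with e | e
      · exact Or.inl (Prod.ext e (by rw [hg2, hg02, e]))
      · exact Or.inr (Prod.ext e (by rw [hg2, hg02]; rw [e]; ring))
  -- assemble generic part
  have hTgensum : Tgen.card = ∑ g ∈ G, (Tgen.filter (fun w => (w.1.1, w.2.1) = g)).card :=
    Finset.card_eq_sum_card_fiberwise hmapsG
  have hTgenle : (Tgen.card : ℝ) ≤ 4 * ∑ g ∈ G, (nuF P (φ g) : ℝ) := by
    rw [hTgensum, Finset.mul_sum]
    push_cast
    apply Finset.sum_le_sum
    intro g hg
    exact_mod_cast hfib4 g hg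
  set μ : ℝ := (P.card : ℝ) / p with hμ
  have hμ0 : 0 ≤ μ := by positivity
  have hdev : ∑ g ∈ G, ((nuF P (φ g) : ℝ) - μ) ^ 2 ≤ 2 * ((p:ℝ) * P.card) := by
    have h1 := sum_comp_le_of_fiber_le G φ
      (fun mc => ((nuF P mc : ℝ) - μ) ^ 2) (fun b => sq_nonneg _) 2 hfib2
    have h2 := sum_sq_dev P
    calc ∑ g ∈ G, ((nuF P (φ g) : ℝ) - μ) ^ 2
        ≤ 2 * ∑ mc : ZMod p × ZMod p, ((nuF P mc : ℝ) - μ) ^ 2 := by exact_mod_cast h1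
      _ ≤ 2 * ((p:ℝ) * P.card) := by rw [hμ]; nlinarith [h2]
  have hGcard : (G.card : ℝ) ≤ a ^ 2 := by
    have h1 : G.card ≤ (A ×ˢ A).card := Finset.card_filter_le _ _
    rw [Finset.card_product] at h1
    have : ((A.card * A.card : ℕ) : ℝ) = a ^ 2 := by push_cast [ha]; ring
    rw [← this]
    exact_mod_cast h1
  have habs : ∑ g ∈ G, |(nuF P (φ g) : ℝ) - μ|
      ≤ Real.sqrt ((G.card : ℝ) * (2 * ((p:ℝ) * P.card))) := by
    have h1 : (∑ g ∈ G, |(nuF P (φ g) : ℝ) - μ|) ^ 2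
        ≤ (G.card : ℝ) * ∑ g ∈ G, |(nuF P (φ g) : ℝ) - μ| ^ 2 := sq_sum_le_card_mul_sum_sq
    have h2 : ∑ g ∈ G, |(nuF P (φ g) : ℝ) - μ| ^ 2 = ∑ g ∈ G, ((nuF P (φ g) : ℝ) - μ) ^ 2 := by
      simp [sq_abs]
    calc ∑ g ∈ G, |(nuF P (φ g) : ℝ) - μ|
        = Real.sqrt ((∑ g ∈ G, |(nuF P (φ g) : ℝ) - μ|) ^ 2) :=
          (Real.sqrt_sq (by positivity)).symm
      _ ≤ Real.sqrt ((G.card : ℝ) * (2 * ((p:ℝ) * P.card))) := by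
          apply Real.sqrt_le_sqrt
          calc (∑ g ∈ G, |(nuF P (φ g) : ℝ) - μ|) ^ 2
              ≤ (G.card : ℝ) * ∑ g ∈ G, ((nuF P (φ g) : ℝ) - μ) ^ 2 := by rw [← h2]; exact h1
            _ ≤ _ := mul_le_mul_of_nonneg_left hdev (by positivity)
  have hsum_nu : ∑ g ∈ G, (nuF P (φ g) : ℝ)
      ≤ a ^ 2 * μ + Real.sqrt ((G.card : ℝ) * (2 * ((p:ℝ) * P.card))) := by
    have hstep : ∑ g ∈ G, (nuF P (φ g) : ℝ) ≤ ∑ g ∈ G, (μ + |(nuF P (φ g) : ℝ) - μ|) := by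
      apply Finset.sum_le_sum
      intro g _
      have h := le_abs_self ((nuF P (φ g) : ℝ) - μ)
      linarith
    rw [Finset.sum_add_distrib, Finset.sum_const, nsmul_eq_mul] at hstep
    have : (G.card : ℝ) * μ ≤ a ^ 2 * μ := mul_le_mul_of_nonneg_right hGcard hμ0
    linarith [habs]
  -- numeric assembly
  have hsqrt_bound : Real.sqrt ((G.card : ℝ) * (2 * ((p:ℝ) * P.card)))
      ≤ (3/2) * a ^ 2 * Real.sqrt p := by
    have harg : (G.card : ℝ) * (2 * ((p:ℝ) * P.card)) ≤ ((3/2) * a ^ 2 * Real.sqrt p) ^ 2 := by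
      have hsq : (Real.sqrt p) ^ 2 = p := Real.sq_sqrt hp0.le
      have hGc0 : (0:ℝ) ≤ (G.card : ℝ) := by positivity
      have key : (G.card:ℝ) * (2 * ((p:ℝ) * P.card)) ≤ a^2 * (2 * ((p:ℝ) * a^2)) := by
        apply mul_le_mul hGcard ?_ (by positivity) (by positivity)
        have hPp : (p:ℝ) * P.card ≤ (p:ℝ) * a^2 :=
          mul_le_mul_of_nonneg_left hPcard hp0.le
        linarith
      have hexp : ((3/2) * a^2 * Real.sqrt p)^2 = 9/4 * (a^4 * (p:ℝ)) := by
        rw [mul_pow, mul_pow, hsq]; ring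
      have hX : (0:ℝ) ≤ a^4 * p := by positivity
      nlinarith [key, hexp, hX]
    calc Real.sqrt ((G.card : ℝ) * (2 * ((p:ℝ) * P.card)))
        ≤ Real.sqrt (((3/2) * a ^ 2 * Real.sqrt p) ^ 2) := Real.sqrt_le_sqrt harg
      _ = (3/2) * a ^ 2 * Real.sqrt p := Real.sqrt_sq (by positivity)
  have hμa : a ^ 2 * μ ≤ a ^ 4 / p := by
    rw [hμ, show a^4/(p:ℝ) = a^2*(a^2/(p:ℝ)) by ring]
    gcongr
  -- final assembly
  have hT_real : (T.card : ℝ) = (Tsp.card : ℝ) + (Tgen.card : ℝ) := by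
    exact_mod_cast congrArg (Nat.cast : ℕ → ℝ) hsplit.symm
  have h6 : (Tsp.card : ℝ) ≤ 6 * a ^ 2 := by
    have : ((6 * D.card : ℕ) : ℝ) = 6 * a ^ 2 := by push_cast [hDa]; ring
    rw [← this]
    exact_mod_cast hsp
  have h6s : 6 * a ^ 2 ≤ 6 * a ^ 2 * Real.sqrt p := by nlinarith [hsp1, sq_nonneg a]
  have hTgenfinal : (Tgen.card : ℝ) ≤ 4 * (a ^ 4 / p) + 6 * a ^ 2 * Real.sqrt p := by
    have h4 : 4 * (∑ g ∈ G, (nuF P (φ g) : ℝ))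
        ≤ 4 * (a ^ 2 * μ + Real.sqrt ((G.card : ℝ) * (2 * ((p:ℝ) * P.card)))) := by
      linarith [hsum_nu]
    linarith [hTgenle, h4, hμa, hsqrt_bound]
  have hfinal : (T.card : ℝ) ≤ 4 * (a ^ 4 / p) + 12 * a ^ 2 * Real.sqrt p := by
    rw [hT_real]
    linarith [h6, h6s, hTgenfinal]
  calc ((T.card : ℕ) : ℝ) ≤ 4 * (a ^ 4 / p) + 12 * a ^ 2 * Real.sqrt p := hfinal
    _ = 4 * a ^ 4 / p + 12 * a ^ 2 * Real.sqrt p := by ring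

end Helpers
section Final

variable {p : ℕ} [Fact p.Prime]

lemma cs_step (A : Finset (ZMod p)) :
    ((A.card : ℝ))^2 * ((A.card : ℝ))^2 ≤
      (((A ×ˢ A).image (fxy (p := p))).card : ℝ) *
      ((((A ×ˢ A) ×ˢ (A ×ˢ A)).filter (fun w => fxy w.1 = fxy w.2)).card : ℝ) := by
  classical
  set D := A ×ˢ A with hD
  set S := D.image (fxy (p := p)) with hS
  set r : ZMod p → ℕ := fun s => (D.filter (fun w => fxy w = s)).card with hr
  have h1 : ∑ s ∈ S, r s = D.card := (Finset.card_eq_sum_card_image fxy D).symm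
  have h2 : (((D ×ˢ D).filter (fun w => fxy w.1 = fxy w.2)).card : ℕ) = ∑ s ∈ S, (r s)^2 := by
    rw [Finset.card_eq_sum_card_fiberwise (f := fun w => fxy w.1) (t := S)
      (fun w hw => Finset.mem_image_of_mem fxy
        (Finset.mem_product.mp (Finset.mem_filter.mp hw).1).1)]
    apply Finset.sum_congr rfl
    intro s _
    rw [Finset.filter_filter]
    have hset : (D ×ˢ D).filter (fun w => fxy w.1 = fxy w.2 ∧ fxy w.1 = s)
        = (D.filter (fun w => fxy w = s)) ×ˢ (D.filter (fun w => fxy w = s)) := by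
      ext w
      simp only [Finset.mem_filter, Finset.mem_product]
      constructor
      · rintro ⟨⟨hw1, hw2⟩, heq, hs⟩
        exact ⟨⟨hw1, hs⟩, hw2, heq ▸ hs⟩
      · rintro ⟨⟨hw1, hs1⟩, hw2, hs2⟩
        exact ⟨⟨hw1, hw2⟩, hs1.trans hs2.symm, hs1⟩
    rw [hset, Finset.card_product, hr, sq]
  have hCS : (∑ s ∈ S, (r s : ℝ))^2 ≤ (S.card : ℝ) * ∑ s ∈ S, (r s : ℝ)^2 :=
    sq_sum_le_card_mul_sum_sq
  have hDcard : (D.card : ℝ) = (A.card : ℝ) * (A.card : ℝ) := by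
    rw [hD, Finset.card_product]; push_cast; ring
  calc ((A.card : ℝ))^2 * ((A.card : ℝ))^2 = ((D.card : ℝ))^2 := by rw [hDcard]; ring
    _ = (∑ s ∈ S, (r s : ℝ))^2 := by rw_mod_cast [h1]
    _ ≤ (S.card : ℝ) * ∑ s ∈ S, (r s : ℝ)^2 := hCS
    _ = _ := by rw_mod_cast [← h2]

lemma key_bound (A : Finset (ZMod p)) (hA : ∀ a ∈ A, a ≠ 0) :
    (1/24 : ℝ) * min ((A.card : ℝ) ^ 2 / Real.sqrt p) (Real.sqrt ((p : ℝ) * A.card))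
      ≤ ((Finset.image₂ (fun x y => x * (x ^ 2 + y ^ 2)) A A).card : ℝ) := by
  classical
  have hp2 : 2 ≤ p := (Fact.out (p := p.Prime)).two_le
  have hp0 : (0:ℝ) < p := by exact_mod_cast Nat.lt_of_lt_of_le Nat.zero_lt_two hp2
  have hsp0 : (0:ℝ) < Real.sqrt p := Real.sqrt_pos.mpr hp0
  rcases Finset.eq_empty_or_nonempty A with rfl | hne
  · simp
  -- nonempty
  have ha1 : (1:ℝ) ≤ (A.card : ℝ) := by exact_mod_cast hne.card_pos
  set a : ℝ := (A.card : ℝ) with ha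
  have ha0 : (0:ℝ) < a := lt_of_lt_of_le one_pos ha1
  have hap : a ≤ p := by
    rw [ha]
    calc ((A.card : ℕ) : ℝ) ≤ ((Fintype.card (ZMod p) : ℕ) : ℝ) := by
          exact_mod_cast Finset.card_le_univ A
      _ = p := by rw [ZMod.card]
  have hSS : Finset.image₂ (fun x y => x * (x ^ 2 + y ^ 2)) A A
      = (A ×ˢ A).image (fxy (p := p)) := rfl
  rw [hSS]
  set Scard : ℝ := (((A ×ˢ A).image (fxy (p := p))).card : ℝ) with hScard
  have hS0 : 0 ≤ Scard := by positivity
  set E : ℝ := ((((A ×ˢ A) ×ˢ (A ×ˢ A)).filter (fun w => fxy w.1 = fxy w.2)).card : ℝ)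
    with hE
  have hCS : a^2 * a^2 ≤ Scard * E := cs_step A
  have hEB : E ≤ 4 * a ^ 4 / p + 12 * a ^ 2 * Real.sqrt p := energy_bound A hA
  have hE0 : 0 ≤ E := by positivity
  by_cases hcase : 4 * a ^ 4 / p ≤ 12 * a ^ 2 * Real.sqrt p
  · -- small case : E ≤ 24 a² √p, S ≥ a²/(24√p)
    have h1 : a^2 * a^2 ≤ Scard * (24 * a^2 * Real.sqrt p) := by
      calc a^2 * a^2 ≤ Scard * E := hCS
        _ ≤ Scard * (24 * a^2 * Real.sqrt p) := by
            apply mul_le_mul_of_nonneg_left ?_ hS0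
            linarith
    have hkey : a^2 / Real.sqrt p ≤ 24 * Scard := by
      rw [div_le_iff₀ hsp0]
      have hpos : (0:ℝ) < a^2 := by positivity
      nlinarith [h1, hpos, hsp0, hS0]
    calc (1/24 : ℝ) * min (a ^ 2 / Real.sqrt p) (Real.sqrt ((p : ℝ) * a))
        ≤ (1/24 : ℝ) * (a^2 / Real.sqrt p) := by
          apply mul_le_mul_of_nonneg_left (min_le_left _ _) (by norm_num)
      _ ≤ (1/24 : ℝ) * (24 * Scard) := by
          apply mul_le_mul_of_nonneg_left hkey (by norm_num)
      _ = Scard := by ring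
  · -- large case : E ≤ 8 a⁴ / p, S ≥ p/8
    push_neg at hcase
    have h1 : a^2 * a^2 ≤ Scard * (8 * a^4 / p) := by
      calc a^2 * a^2 ≤ Scard * E := hCS
        _ ≤ Scard * (8 * a^4 / p) := by
            apply mul_le_mul_of_nonneg_left ?_ hS0
            have h8 : 4 * a ^ 4 / ↑p + 12 * a ^ 2 * Real.sqrt p ≤ 8 * a ^ 4 / ↑p := by
              have : 4 * a ^ 4 / ↑p + 4 * a ^ 4 / ↑p = 8 * a ^ 4 / ↑p := by ring
              linarith
            linarith
    have hp8 : (p:ℝ) ≤ 8 * Scard := by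
      have h2 : a^2 * a^2 * p ≤ Scard * (8 * a^4) := by
        have := mul_le_mul_of_nonneg_right h1 hp0.le
        calc a^2 * a^2 * p ≤ Scard * (8 * a^4 / p) * p := this
          _ = Scard * (8 * a^4) := by field_simp
      have ha4 : (1:ℝ) ≤ a^4 := by nlinarith [ha1, sq_nonneg a, sq_nonneg (a^2 - 1), sq_nonneg (a - 1)]
      nlinarith [h2, ha4, hS0]
    have hsqrtpa : Real.sqrt ((p:ℝ) * a) ≤ p := by
      calc Real.sqrt ((p:ℝ) * a) ≤ Real.sqrt ((p:ℝ) * p) := by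
            apply Real.sqrt_le_sqrt
            nlinarith [hap, hp0]
        _ = p := Real.sqrt_mul_self hp0.le
    calc (1/24 : ℝ) * min (a ^ 2 / Real.sqrt p) (Real.sqrt ((p : ℝ) * a))
        ≤ (1/24 : ℝ) * Real.sqrt ((p : ℝ) * a) := by
          apply mul_le_mul_of_nonneg_left (min_le_right _ _) (by norm_num)
      _ ≤ (1/24 : ℝ) * (8 * Scard) := by
          apply mul_le_mul_of_nonneg_left (le_trans hsqrtpa hp8) (by norm_num)
      _ ≤ Scard := by linarith [hS0]

end Final

/-- Corollary: for `f(x,y) = x(x²+y²)` and any `A ⊆ 𝔽_p^*`,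
`max(|f(A,A)|, |A·A|) ≫ min(|A|²/√p, √(p|A|))`. -/
theorem stmt_7 : ∃ κ : ℝ, 0 < κ ∧ ∀ (p : ℕ), p.Prime →
    ∀ A : Finset (ZMod p), (∀ a ∈ A, a ≠ 0) →
      max ((Finset.image₂ (fun x y => x * (x ^ 2 + y ^ 2)) A A).card : ℝ) ((A * A).card : ℝ) ≥
        κ * min ((A.card : ℝ) ^ 2 / Real.sqrt p) (Real.sqrt ((p : ℝ) * A.card)) := by
  refine ⟨1/24, by norm_num, ?_⟩
  intro p hp A hA
  haveI : Fact p.Prime := ⟨hp⟩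
  have h := key_bound A hA
  exact le_trans h (le_max_left _ _)
end

section
/- There exists an absolute constant κ > 0 with the following property. Let p be a prime, G a subgroup of 𝔽_p^*, and g, h : G → 𝔽_p^* arbitrary functions; define f(x,y) = g(x)(h(x) + y) and set m = μ(g). Then for any sets A ⊆ G and B, C ⊆ 𝔽_p^*, one has |f(A,B)| · |B+C| ≥ κ · min( p·|B| / m, |A|·|B|²·|C| / (p·m²) ). -/
open Pointwise Finset

section IncidenceHelpers
variable {p : ℕ} [Fact p.Prime]


/-- number of non-vertical lines through a point is `p` -/
lemma aux_lines_through (q : ZMod p × ZMod p) :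
    (Finset.univ.filter fun ab : ZMod p × ZMod p => q.2 = ab.1 * q.1 + ab.2).card = p := by
  have h : (Finset.univ.filter fun ab : ZMod p × ZMod p => q.2 = ab.1 * q.1 + ab.2)
      = Finset.univ.image (fun α : ZMod p => (α, q.2 - α * q.1)) := by
    ext ab
    simp only [mem_filter, mem_univ, true_and, mem_image]
    constructor
    · intro hc
      exact ⟨ab.1, by rw [Prod.ext_iff]; exact ⟨rfl, by rw [hc]; ring⟩⟩
    · rintro ⟨α, rfl⟩
      simp
  rw [h, Finset.card_image_of_injective _ (fun a b hab => (Prod.mk.injEq _ _ _ _).mp hab |>.1)]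
  simp [ZMod.card]

lemma aux_two_points {q q' : ZMod p × ZMod p} (hqq : q ≠ q') :
    (Finset.univ.filter fun ab : ZMod p × ZMod p =>
      q.2 = ab.1 * q.1 + ab.2 ∧ q'.2 = ab.1 * q'.1 + ab.2).card ≤ 1 := by
  rw [Finset.card_le_one]
  intro a ha b hb
  simp only [mem_filter, mem_univ, true_and] at ha hb
  obtain ⟨h1, h2⟩ := ha
  obtain ⟨h3, h4⟩ := hb
  by_cases hab : a.1 = b.1
  · have : a.2 = b.2 := by linear_combination h3 - h1 - q.1 * hab
    exact Prod.ext hab this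
  · exfalso
    have hne : a.1 - b.1 ≠ 0 := sub_ne_zero.mpr hab
    have hq1 : q.1 = q'.1 := by
      have : (a.1 - b.1) * q.1 = (a.1 - b.1) * q'.1 := by linear_combination h3 - h1 + h2 - h4
      exact mul_left_cancel₀ hne this
    have hq2 : q.2 = q'.2 := by linear_combination h1 - h2 + a.1 * hq1
    exact hqq (Prod.ext hq1 hq2)

lemma aux_sum1 (P : Finset (ZMod p × ZMod p)) :
    ∑ ab : ZMod p × ZMod p, (P.filter fun q => q.2 = ab.1 * q.1 + ab.2).card = P.card * p := by
  have h : ∀ ab : ZMod p × ZMod p, (P.filter fun q => q.2 = ab.1 * q.1 + ab.2).card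
      = ∑ q ∈ P, if q.2 = ab.1 * q.1 + ab.2 then 1 else 0 := fun ab => Finset.card_filter _ _
  simp only [h]
  rw [Finset.sum_comm]
  have h2 : ∀ q ∈ P, (∑ ab : ZMod p × ZMod p, if q.2 = ab.1 * q.1 + ab.2 then 1 else 0) = p := by
    intro q _
    rw [← Finset.card_filter]
    exact aux_lines_through q
  rw [Finset.sum_congr rfl h2, Finset.sum_const, smul_eq_mul]

lemma aux_sum2 (P : Finset (ZMod p × ZMod p)) :
    ∑ ab : ZMod p × ZMod p, ((P.filter fun q => q.2 = ab.1 * q.1 + ab.2).card) ^ 2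
      ≤ P.card * p + P.card ^ 2 := by
  have h : ∀ ab : ZMod p × ZMod p, ((P.filter fun q => q.2 = ab.1 * q.1 + ab.2).card) ^ 2
      = ∑ q ∈ P, ∑ q' ∈ P,
          if q.2 = ab.1 * q.1 + ab.2 ∧ q'.2 = ab.1 * q'.1 + ab.2 then 1 else 0 := by
    intro ab
    rw [sq, Finset.card_filter, Finset.sum_mul_sum]
    apply Finset.sum_congr rfl; intro q _
    apply Finset.sum_congr rfl; intro q' _
    by_cases h1 : q.2 = ab.1 * q.1 + ab.2 <;> by_cases h2 : q'.2 = ab.1 * q'.1 + ab.2 <;>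
      simp [h1, h2]
  simp only [h]
  rw [Finset.sum_comm]
  have hb : ∀ q ∈ P, (∑ ab : ZMod p × ZMod p, ∑ q' ∈ P,
      if q.2 = ab.1 * q.1 + ab.2 ∧ q'.2 = ab.1 * q'.1 + ab.2 then 1 else 0) ≤ p + P.card := by
    intro q _
    rw [Finset.sum_comm]
    have hq' : ∀ q' ∈ P, (∑ ab : ZMod p × ZMod p,
        if q.2 = ab.1 * q.1 + ab.2 ∧ q'.2 = ab.1 * q'.1 + ab.2 then 1 else 0)
        ≤ if q = q' then p else 1 := by
      intro q' _
      rw [← Finset.card_filter]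
      by_cases hqq : q = q'
      · subst hqq
        rw [if_pos rfl]
        apply le_of_eq
        calc (Finset.univ.filter fun ab : ZMod p × ZMod p =>
              q.2 = ab.1 * q.1 + ab.2 ∧ q.2 = ab.1 * q.1 + ab.2).card
            = (Finset.univ.filter fun ab : ZMod p × ZMod p => q.2 = ab.1 * q.1 + ab.2).card := by
              congr 1; apply Finset.filter_congr; intro ab _; simp
          _ = p := aux_lines_through q
      · rw [if_neg hqq]
        exact aux_two_points hqq
    calc (∑ q' ∈ P, ∑ ab : ZMod p × ZMod p,
          if q.2 = ab.1 * q.1 + ab.2 ∧ q'.2 = ab.1 * q'.1 + ab.2 then 1 else 0)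
        ≤ ∑ q' ∈ P, if q = q' then p else 1 := Finset.sum_le_sum hq'
      _ ≤ ∑ q' ∈ P, ((if q = q' then p else 0) + 1) := by
          apply Finset.sum_le_sum; intro q' _; by_cases hqq : q = q' <;> simp [hqq]
      _ = (if q ∈ P then p else 0) + P.card := by
          rw [Finset.sum_add_distrib, Finset.sum_ite_eq, Finset.sum_const, smul_eq_mul, mul_one]
      _ ≤ p + P.card := by
          apply Nat.add_le_add_right; split <;> omega
  calc (∑ q ∈ P, ∑ ab : ZMod p × ZMod p, ∑ q' ∈ P,
        if q.2 = ab.1 * q.1 + ab.2 ∧ q'.2 = ab.1 * q'.1 + ab.2 then 1 else 0)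
      ≤ ∑ _q ∈ P, (p + P.card) := Finset.sum_le_sum hb
    _ = P.card * p + P.card ^ 2 := by rw [Finset.sum_const, smul_eq_mul]; ring

/-- Incidence dichotomy: if every line of `L` meets `P` in at least `b` points then either
`|L| b² ≤ 4 p |P|` or `p b ≤ 2 |P|`. -/
lemma aux_main (P L : Finset (ZMod p × ZMod p)) (b : ℕ)
    (hb : ∀ ab ∈ L, b ≤ (P.filter fun q => q.2 = ab.1 * q.1 + ab.2).card) :
    (L.card : ℝ) * (b : ℝ) ^ 2 ≤ 4 * ((p : ℝ) * (P.card : ℝ))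
      ∨ (p : ℝ) * (b : ℝ) ≤ 2 * (P.card : ℝ) := by
  have hp := (Fact.out : p.Prime)
  have hpP : 0 < (p : ℝ) := by exact_mod_cast hp.pos
  set PP := (P.card : ℝ) with hPP
  have hPP0 : 0 ≤ PP := by positivity
  by_cases hcase : (b : ℝ) / 2 ≤ PP / p
  · right
    have h1 := mul_le_mul_of_nonneg_right hcase (le_of_lt hpP)
    rw [div_mul_cancel₀ _ (ne_of_gt hpP)] at h1
    nlinarith
  · left
    rcases L.eq_empty_or_nonempty with rfl | hLne
    · simp; positivity
    have hL1 : (1 : ℝ) ≤ L.card := by exact_mod_cast Finset.card_pos.mpr hLne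
    have hlt : PP / p < (b : ℝ) / 2 := lt_of_not_ge hcase
    set n : ZMod p × ZMod p → ℝ :=
      (fun ab => ((P.filter fun q => q.2 = ab.1 * q.1 + ab.2).card : ℝ)) with hn
    have hsum1 : ∑ ab : ZMod p × ZMod p, n ab = PP * p := by
      simp only [hn, hPP]
      exact_mod_cast congrArg (Nat.cast : ℕ → ℝ) (aux_sum1 P)
    have hsum2 : ∑ ab : ZMod p × ZMod p, n ab ^ 2 ≤ PP * p + PP ^ 2 := by
      simp only [hn, hPP]
      exact_mod_cast aux_sum2 P
    have hvar_univ : ∑ ab : ZMod p × ZMod p, (n ab - PP / p) ^ 2 ≤ p * PP := by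
      have hcard : ((Fintype.card (ZMod p × ZMod p) : ℕ) : ℝ) = (p : ℝ) * p := by
        rw [Fintype.card_prod, ZMod.card]; push_cast; ring
      have e : ∀ ab : ZMod p × ZMod p,
          (n ab - PP / p) ^ 2 = n ab ^ 2 - 2 * (PP / p) * n ab + (PP / p) ^ 2 :=
        fun ab => by ring
      have expand : ∑ ab : ZMod p × ZMod p, (n ab - PP / p) ^ 2
          = (∑ ab : ZMod p × ZMod p, n ab ^ 2)
            - 2 * (PP / p) * (∑ ab : ZMod p × ZMod p, n ab)
            + ((p : ℝ) * p) * (PP / p) ^ 2 := by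
        rw [Finset.sum_congr rfl fun ab _ => e ab]
        rw [Finset.sum_add_distrib, Finset.sum_sub_distrib, ← Finset.mul_sum,
          Finset.sum_const, Finset.card_univ, nsmul_eq_mul, hcard]
      rw [expand, hsum1]
      have e1 : 2 * (PP / p) * (PP * p) = 2 * PP ^ 2 := by field_simp
      have e2 : ((p : ℝ) * p) * (PP / p) ^ 2 = PP ^ 2 := by field_simp
      rw [e1, e2]
      linarith [hsum2]
    have hvarL : ∑ ab ∈ L, (n ab - PP / p) ^ 2 ≤ p * PP :=
      le_trans (Finset.sum_le_sum_of_subset_of_nonneg (Finset.subset_univ L)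
        (fun i _ _ => sq_nonneg _)) hvar_univ
    have hCS : (∑ ab ∈ L, (n ab - PP / p)) ^ 2 ≤ (L.card : ℝ) * ((p : ℝ) * PP) := by
      calc (∑ ab ∈ L, (n ab - PP / p)) ^ 2
          = (∑ ab ∈ L, 1 * (n ab - PP / p)) ^ 2 := by simp
        _ ≤ (∑ _ab ∈ L, (1 : ℝ) ^ 2) * (∑ ab ∈ L, (n ab - PP / p) ^ 2) :=
            Finset.sum_mul_sq_le_sq_mul_sq _ _ _
        _ ≤ (L.card : ℝ) * ((p : ℝ) * PP) := by
            rw [Finset.sum_const, nsmul_eq_mul]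
            simp only [one_pow, mul_one]
            exact mul_le_mul_of_nonneg_left hvarL (by positivity)
    have hterm : ∀ ab ∈ L, (b : ℝ) / 2 ≤ n ab - PP / p := by
      intro ab hab
      have hbR : (b : ℝ) ≤ n ab := by
        simp only [hn]; exact_mod_cast hb ab hab
      linarith
    have hsumL : (L.card : ℝ) * ((b : ℝ) / 2) ≤ ∑ ab ∈ L, (n ab - PP / p) := by
      calc (L.card : ℝ) * ((b : ℝ) / 2) = ∑ _ab ∈ L, ((b : ℝ) / 2) := by
            rw [Finset.sum_const, nsmul_eq_mul]
        _ ≤ _ := Finset.sum_le_sum hterm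
    have hsq : ((L.card : ℝ) * ((b : ℝ) / 2)) ^ 2 ≤ (L.card : ℝ) * ((p : ℝ) * PP) :=
      le_trans (pow_le_pow_left₀ (by positivity) hsumL 2) hCS
    nlinarith [hL1, hsq, sq_nonneg ((b : ℝ)), hPP0]

end IncidenceHelpers

/-- Theorem 2: there is an absolute constant `κ > 0` such that for `G` a subgroup of
`𝔽_p^*`, arbitrary `g, h : G → 𝔽_p^*`, `f(x,y) = g(x)(h(x)+y)` and `m = μ(g)`,
for all `A ⊆ G` and `B, C ⊆ 𝔽_p^*`,
`|f(A,B)|·|B+C| ≥ κ·min(p|B|/m, |A||B|²|C|/(p m²))`. -/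
theorem stmt_8 : ∃ κ : ℝ, 0 < κ ∧ ∀ (p : ℕ), p.Prime →
    ∀ G : Finset (ZMod p), (0 : ZMod p) ∉ G → (1 : ZMod p) ∈ G →
      (∀ x ∈ G, ∀ y ∈ G, x * y ∈ G) → (∀ x ∈ G, x⁻¹ ∈ G) →
    ∀ g h : ZMod p → ZMod p, (∀ x ∈ G, g x ≠ 0) → (∀ x ∈ G, h x ≠ 0) →
    ∀ m : ℕ, m = ((G.image g).sup fun t => (G.filter fun x => g x = t).card) →
    ∀ A B C : Finset (ZMod p), A ⊆ G → (∀ b ∈ B, b ≠ 0) → (∀ c ∈ C, c ≠ 0) →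
      ((Finset.image₂ (fun x y => g x * (h x + y)) A B).card : ℝ) * ((B + C).card : ℝ) ≥
        κ * min (((p : ℝ) * (B.card : ℝ)) / (m : ℝ))
          (((A.card : ℝ) * (B.card : ℝ) ^ 2 * (C.card : ℝ)) / ((p : ℝ) * (m : ℝ) ^ 2)) := by
  refine ⟨1/4, by norm_num, ?_⟩
  intro p hp G hG0 hG1 hGmul hGinv g h hg hh m hm A B C hA hB hC
  haveI : Fact p.Prime := ⟨hp⟩
  set t1 : ℝ := ((p : ℝ) * (B.card : ℝ)) / (m : ℝ) with ht1
  set t2 : ℝ := ((A.card : ℝ) * (B.card : ℝ) ^ 2 * (C.card : ℝ)) / ((p : ℝ) * (m : ℝ) ^ 2)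
    with ht2
  set D := Finset.image₂ (fun x y => g x * (h x + y)) A B with hD
  set S := B + C with hS
  have hpP : 0 < (p : ℝ) := by exact_mod_cast hp.pos
  -- trivial cases
  have htriv : (A.card : ℝ) * (B.card : ℝ) ^ 2 * (C.card : ℝ) = 0 →
      ((D.card : ℝ) * (S.card : ℝ) ≥ 1/4 * min t1 t2) := by
    intro h0
    have h1 : t2 = 0 := by rw [ht2, h0, zero_div]
    have h2 : min t1 t2 ≤ 0 := le_trans (min_le_right _ _) (le_of_eq h1)
    have h3 : 1/4 * min t1 t2 ≤ 0 := by nlinarith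
    exact le_trans h3 (by positivity)
  rcases A.eq_empty_or_nonempty with rfl | hAne
  · exact htriv (by simp)
  rcases B.eq_empty_or_nonempty with rfl | hBne
  · exact htriv (by simp)
  rcases C.eq_empty_or_nonempty with rfl | hCne
  · exact htriv (by simp)
  obtain ⟨x₀, hx₀⟩ := hAne
  obtain ⟨c₀, hc₀⟩ := hCne
  -- m ≥ 1
  have hm1 : 1 ≤ m := by
    rw [hm]
    have hx₀G : x₀ ∈ G := hA hx₀
    calc 1 ≤ (G.filter fun x => g x = g x₀).card :=
          Finset.card_pos.mpr ⟨x₀, Finset.mem_filter.mpr ⟨hx₀G, rfl⟩⟩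
      _ ≤ _ := Finset.le_sup (f := fun t => (G.filter fun x => g x = t).card)
          (Finset.mem_image_of_mem g hx₀G)
  have hmR : (1 : ℝ) ≤ m := by exact_mod_cast hm1
  set P := D ×ˢ S with hP
  set L := (A ×ˢ C).image
    (fun xc : ZMod p × ZMod p => ((g xc.1)⁻¹, xc.2 - h xc.1)) with hL
  -- fibers of g on A have size ≤ m
  have hfib : ∀ x ∈ A, (A.filter fun y => g y = g x).card ≤ m := by
    intro x hx
    calc (A.filter fun y => g y = g x).card
        ≤ (G.filter fun y => g y = g x).card :=
          Finset.card_le_card (Finset.filter_subset_filter _ hA)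
      _ ≤ m := by
          rw [hm]
          exact Finset.le_sup (f := fun t => (G.filter fun x => g x = t).card)
            (Finset.mem_image_of_mem g (hA hx))
  -- every line of L contains at least |B| points of P
  have hNB : ∀ ab ∈ L, B.card ≤ (P.filter fun q => q.2 = ab.1 * q.1 + ab.2).card := by
    intro ab hab
    obtain ⟨xc, hxc, rfl⟩ := Finset.mem_image.mp hab
    obtain ⟨hx, hc⟩ := Finset.mem_product.mp hxc
    have hgx : g xc.1 ≠ 0 := hg _ (hA hx)
    apply Finset.card_le_card_of_injOn (fun b => (g xc.1 * (h xc.1 + b), b + xc.2))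
    · intro b hb'
      refine Finset.mem_filter.mpr ⟨Finset.mem_product.mpr ⟨?_, ?_⟩, ?_⟩
      · exact Finset.mem_image₂_of_mem hx hb'
      · exact Finset.add_mem_add hb' hc
      · show b + xc.2 = (g xc.1)⁻¹ * (g xc.1 * (h xc.1 + b)) + (xc.2 - h xc.1)
        rw [inv_mul_cancel_left₀ hgx]; ring
    · intro b _ b' _ hbb
      have h2 := congrArg Prod.snd hbb
      simpa using h2
  -- |A| * |C| ≤ m * |L|
  have hAC : A.card * C.card ≤ m * L.card := by
    rw [← Finset.card_product]
    apply Finset.card_le_mul_card_image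
    intro ℓ hℓ
    rcases Finset.eq_empty_or_nonempty
        ((A ×ˢ C).filter fun xc => ((g xc.1)⁻¹, xc.2 - h xc.1) = ℓ) with he | ⟨xc₀, hxc₀⟩
    · rw [he]; simp
    · obtain ⟨hx₀', hℓ₀⟩ := Finset.mem_filter.mp hxc₀
      obtain ⟨hx₀A, _⟩ := Finset.mem_product.mp hx₀'
      calc ((A ×ˢ C).filter fun xc => ((g xc.1)⁻¹, xc.2 - h xc.1) = ℓ).card
          ≤ (A.filter fun y => g y = g xc₀.1).card := by
            apply Finset.card_le_card_of_injOn Prod.fst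
            · intro xc hxc
              obtain ⟨hxcP, hxcℓ⟩ := Finset.mem_filter.mp (Finset.mem_coe.mp hxc)
              obtain ⟨hxA, _⟩ := Finset.mem_product.mp hxcP
              refine Finset.mem_coe.mpr (Finset.mem_filter.mpr ⟨hxA, ?_⟩)
              have e1 : (g xc.1)⁻¹ = (g xc₀.1)⁻¹ := by
                rw [show (g xc.1)⁻¹ = ℓ.1 from congrArg Prod.fst hxcℓ,
                  show (g xc₀.1)⁻¹ = ℓ.1 from congrArg Prod.fst hℓ₀]
              exact inv_injective e1
            · intro a ha b hb hab
              obtain ⟨_, haℓ⟩ := Finset.mem_filter.mp (Finset.mem_coe.mp ha)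
              obtain ⟨_, hbℓ⟩ := Finset.mem_filter.mp (Finset.mem_coe.mp hb)
              have e2 : a.2 - h a.1 = b.2 - h b.1 := by
                rw [show a.2 - h a.1 = ℓ.2 from congrArg Prod.snd haℓ,
                  show b.2 - h b.1 = ℓ.2 from congrArg Prod.snd hbℓ]
              have e3 : a.2 = b.2 := by
                have := e2
                rw [hab] at this
                exact sub_left_injective this
              exact Prod.ext hab e3
        _ ≤ m := hfib _ hx₀A
  -- put things together
  have hACR : (A.card : ℝ) * (C.card : ℝ) ≤ (m : ℝ) * (L.card : ℝ) := by exact_mod_cast hAC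
  have hPcard : (P.card : ℝ) = (D.card : ℝ) * (S.card : ℝ) := by
    rw [hP, Finset.card_product]; push_cast; ring
  have hDS0 : (0 : ℝ) ≤ (D.card : ℝ) * (S.card : ℝ) := by positivity
  rcases aux_main P L B.card hNB with hcase | hcase
  · -- rich case: min ≤ t2 suffices
    rw [hPcard] at hcase
    have hABC : (A.card : ℝ) * (B.card : ℝ) ^ 2 * (C.card : ℝ)
        ≤ 4 * ((p : ℝ) * ((m : ℝ) ^ 2 * ((D.card : ℝ) * (S.card : ℝ)))) := by
      have s1 : (A.card : ℝ) * (C.card : ℝ) * (B.card : ℝ) ^ 2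
          ≤ (m : ℝ) * ((L.card : ℝ) * (B.card : ℝ) ^ 2) := by nlinarith [sq_nonneg ((B.card : ℝ))]
      have s2 : (m : ℝ) * ((L.card : ℝ) * (B.card : ℝ) ^ 2)
          ≤ (m : ℝ) * (4 * ((p : ℝ) * ((D.card : ℝ) * (S.card : ℝ)))) := by
        apply mul_le_mul_of_nonneg_left hcase (by positivity)
      nlinarith [s1, s2, mul_nonneg (mul_nonneg hpP.le hDS0) (by positivity : (0:ℝ) ≤ (m:ℝ))]
    have h6 : 1/4 * t2 ≤ (D.card : ℝ) * (S.card : ℝ) := by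
      rw [ht2]
      have hdiv : (A.card : ℝ) * (B.card : ℝ) ^ 2 * (C.card : ℝ) / ((p : ℝ) * (m : ℝ) ^ 2)
          ≤ 4 * ((D.card : ℝ) * (S.card : ℝ)) := by
        rw [div_le_iff₀ (by positivity)]
        nlinarith [hABC]
      linarith
    have h5 : (1:ℝ)/4 * min t1 t2 ≤ 1/4 * t2 := by
      have := min_le_right t1 t2; linarith
    exact le_trans h5 h6
  · -- large P case: min ≤ t1 suffices
    rw [hPcard] at hcase
    have h6 : 1/4 * t1 ≤ (D.card : ℝ) * (S.card : ℝ) := by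
      rw [ht1]
      have ht1' : ((p : ℝ) * (B.card : ℝ)) / (m : ℝ) ≤ (p : ℝ) * (B.card : ℝ) :=
        div_le_self (by positivity) hmR
      linarith
    have h5 : (1:ℝ)/4 * min t1 t2 ≤ 1/4 * t1 := by
      have := min_le_left t1 t2; linarith
    exact le_trans h5 h6
end

section
/- There exists an absolute constant κ > 0 with the following property. Define f(x,y) = xy(x + y) and let A, B be nonempty finite sets of nonzero real numbers. Then |f(A,B)| ≥ κ · |A|^{2/3} · |B|^{2/3}. -/
/-!
Let `f(x, y) = x y (x + y)`. Keeping the larger sign class of each of `A` and `B` costs a factor 2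
in each, and `f(-x, -y) = -f(x, y)` leaves two cases, `C = f(R, S)` and `C = f(R, -S)` with
`R, S ⊆ (0, ∞)`; in the second one a median split further arranges `r ≤ s` on `R × S`. Listing `S`
as `s₀ < ⋯ < s_L`, every row `i ↦ f(r, ±sᵢ)` is then strictly increasing. Put `K = |C|`.

For each row the `L` gaps `(f(r, sᵢ), f(r, sᵢ₊₁))` are disjoint, so they contain `≤ K` elements of
`C` in total, and for at least half of all pairs `(r, i)` the gap contains fewer than `g ≈ 2K/L`
of them. Such gaps are pairs `u < v` of `C` with few elements of `C` between them, and there are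
at most `K g` of those. By Cauchy–Schwarz, `(|R| L)² ≲ K g E`, where `E` counts coincidences of
gaps. Two coincident gaps with the same `i` come from the same row, and for `i ≠ j` a coincidence
is a common point of two conics, of which there are at most four. Hence `E ≤ L |R| + 4 L²`, and
together with `|R| ≤ 2K` this gives `|R|² |S|² ≲ K³`.
-/

open Finset Polynomial
open scoped Pointwise

variable {α β : Type*}

theorem sq_card_le_card_mul_card_filter_eq [DecidableEq β] {s : Finset α} {t : Finset β}
    {φ : α → β} (h : Set.MapsTo φ s t) :
    #s ^ 2 ≤ #t * #{p ∈ s ×ˢ s | φ p.1 = φ p.2} := by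
  have hpairs : #{p ∈ s ×ˢ s | φ p.1 = φ p.2} = ∑ b ∈ t, #{a ∈ s | φ a = b} ^ 2 := by
    rw [card_eq_sum_card_fiberwise (f := fun p => φ p.1) (t := t)
      fun p hp => h (mem_product.mp (mem_filter.mp hp).1).1]
    refine sum_congr rfl fun b _ => ?_
    rw [sq, ← card_product]
    congr 1
    ext p
    simp only [mem_filter, mem_product]
    constructor
    · rintro ⟨⟨⟨h1, h2⟩, h12⟩, rfl⟩
      exact ⟨⟨h1, rfl⟩, h2, h12.symm⟩
    · rintro ⟨⟨h1, rfl⟩, h2, h12⟩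
      exact ⟨⟨⟨h1, h2⟩, h12.symm⟩, rfl⟩
  rw [card_eq_sum_card_fiberwise h, hpairs]
  exact sq_sum_le_card_mul_sum_sq

theorem card_le_two_mul_card_filter_lt {s : Finset α} {h : α → ℕ} {g : ℕ}
    (hsum : 2 * ∑ x ∈ s, h x < g * #s) : #s ≤ 2 * #{x ∈ s | h x < g} := by
  have hbad : #{x ∈ s | ¬h x < g} * g ≤ ∑ x ∈ s, h x :=
    calc #{x ∈ s | ¬h x < g} * g = ∑ x ∈ s with ¬h x < g, g := by simp
      _ ≤ ∑ x ∈ s with ¬h x < g, h x := sum_le_sum fun x hx => not_lt.mp (mem_filter.mp hx).2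
      _ ≤ ∑ x ∈ s, h x := sum_le_sum_of_subset (filter_subset _ _)
  have hsplit := card_filter_add_card_filter_not (s := s) (fun x => h x < g)
  have : #{x ∈ s | ¬h x < g} < #{x ∈ s | h x < g} := by
    apply Nat.lt_of_mul_lt_mul_right (a := g)
    nlinarith
  omega

theorem exists_median [LinearOrder α] {X : Finset α} (hX : X.Nonempty) :
    ∃ θ, #X ≤ 2 * #{x ∈ X | x ≤ θ} ∧ #X ≤ 2 * #{x ∈ X | θ ≤ x} := by
  set e := X.orderEmbOfFin rfl
  set m : Fin #X := ⟨#X / 2, Nat.div_lt_self (card_pos.mpr hX) one_lt_two⟩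
  have hmaps : ∀ (p : α → Prop) [DecidablePred p] (I : Finset (Fin #X)), (∀ i ∈ I, p (e i)) →
      #I ≤ #{x ∈ X | p x} := fun p _ I hI =>
    card_le_card_of_injOn e (fun i hi => mem_filter.mpr ⟨X.orderEmbOfFin_mem rfl i, hI i hi⟩)
      e.injective.injOn
  refine ⟨e m, ?_, ?_⟩
  · have := hmaps (· ≤ e m) (Iic m) fun i hi => e.monotone (mem_Iic.mp hi)
    rw [Fin.card_Iic, Fin.val_mk] at this
    omega
  · have := hmaps (e m ≤ ·) (Ici m) fun i hi => e.monotone (mem_Ici.mp hi)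
    rw [Fin.card_Ici, Fin.val_mk] at this
    omega

theorem sq_mul_sq_le_sixteen_mul {a b a' b' : ℕ} (ha : a ≤ 2 * a') (hb : b ≤ 2 * b') :
    a ^ 2 * b ^ 2 ≤ 16 * (a' ^ 2 * b' ^ 2) :=
  calc a ^ 2 * b ^ 2 ≤ (2 * a') ^ 2 * (2 * b') ^ 2 := by gcongr
    _ = 16 * (a' ^ 2 * b' ^ 2) := by ring

theorem exists_two_mul_lt_mul_le_three_mul {K L : ℕ} (hL : 0 < L) (hLK : L ≤ K) :
    ∃ g, 2 * K < g * L ∧ g * L ≤ 3 * K := by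
  refine ⟨2 * K / L + 1, ?_, ?_⟩
  · simpa only [add_mul, one_mul] using Nat.lt_div_mul_add (a := 2 * K) hL
  · have := Nat.div_mul_le_self (2 * K) L
    rw [add_mul, one_mul]
    omega

section Coincidences

variable {ι κ δ : Type*} [Fintype κ] [DecidableEq δ]

def coincidences (P : ι → κ → δ) (R : Finset ι) : Finset ((ι × κ) × (ι × κ)) :=
  {q ∈ (R ×ˢ univ) ×ˢ (R ×ˢ univ) | P q.1.1 q.1.2 = P q.2.1 q.2.2}

variable [DecidableEq κ]

theorem card_filter_coincidences_eq (P : ι → κ → δ) (R : Finset ι) (i j : κ) :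
    #{q ∈ coincidences P R | (q.1.2, q.2.2) = (i, j)} = #{p ∈ R ×ˢ R | P p.1 i = P p.2 j} := by
  refine card_nbij' (fun q => (q.1.1, q.2.1)) (fun p => ((p.1, i), (p.2, j))) ?_ ?_ ?_ ?_
  · rintro ⟨⟨r, i'⟩, r', j'⟩ hq
    simp only [coincidences, coe_filter, mem_filter, mem_product, mem_univ, and_true,
      Prod.mk.injEq, Set.mem_ofPred_eq] at hq ⊢
    obtain ⟨⟨⟨hr, hr'⟩, hP⟩, rfl, rfl⟩ := hq
    exact ⟨⟨hr, hr'⟩, hP⟩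
  · rintro ⟨r, r'⟩ hp
    simp_all [coincidences]
  · rintro ⟨⟨r, i'⟩, r', j'⟩ hq
    simp_all [coincidences]
  · intro p _
    rfl

theorem card_coincidences_le (P : ι → κ → δ) (R : Finset ι) (k : ℕ)
    (hinj : ∀ i, Set.InjOn (P · i) R)
    (hcross : ∀ i j, i ≠ j → #{p ∈ R ×ˢ R | P p.1 i = P p.2 j} ≤ k) :
    #(coincidences P R) ≤ Fintype.card κ * #R + k * Fintype.card κ ^ 2 := by
  have hterm : ∀ i j, #{p ∈ R ×ˢ R | P p.1 i = P p.2 j} ≤ (if i = j then #R else 0) + k := by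
    intro i j
    split_ifs with hij
    · subst hij
      refine (card_le_card_of_injOn Prod.fst (fun p hp => ?_) fun p hp p' hp' h => ?_).trans
        (Nat.le_add_right _ _)
      · exact (mem_product.mp (mem_filter.mp hp).1).1
      · obtain ⟨hpR, hP⟩ := mem_filter.mp hp
        obtain ⟨hpR', hP'⟩ := mem_filter.mp hp'
        refine Prod.ext h (hinj i (mem_product.mp hpR).2 (mem_product.mp hpR').2 ?_)
        simp only at h ⊢
        rw [← hP, ← hP', h]
    · exact (hcross i j hij).trans_eq (zero_add k).symm
  calc _ = ∑ ij : κ × κ, #{p ∈ R ×ˢ R | P p.1 ij.1 = P p.2 ij.2} := by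
        rw [card_eq_sum_card_fiberwise fun _ _ => mem_coe.mpr (mem_univ (_ : κ × κ))]
        exact sum_congr rfl fun ij _ => card_filter_coincidences_eq P R ij.1 ij.2
    _ ≤ ∑ ij : κ × κ, ((if ij.1 = ij.2 then #R else 0) + k) :=
        sum_le_sum fun ij _ => hterm ij.1 ij.2
    _ = Fintype.card κ * #R + k * Fintype.card κ ^ 2 := by
        rw [sum_add_distrib, Fintype.sum_prod_type]
        simp [sq, mul_comm]

end Coincidences

section Gaps

variable {ι γ : Type*} [LinearOrder γ] {L : ℕ}

def countBetween (C : Finset γ) (p : γ × γ) : ℕ := #{c ∈ C | p.1 < c ∧ c < p.2}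

theorem countBetween_lt_countBetween {C : Finset γ} {u v v' : γ} (hv : v ∈ C) (huv : u < v)
    (hvv' : v < v') : countBetween C (u, v) < countBetween C (u, v') := by
  refine card_lt_card ⟨?_, fun hsub => ?_⟩
  · exact fun c hc => by
      simp only [mem_filter] at hc ⊢
      exact ⟨hc.1, hc.2.1, hc.2.2.trans hvv'⟩
  · have := hsub (mem_filter.mpr ⟨hv, huv, hvv'⟩)
    exact lt_irrefl v (mem_filter.mp this).2.2

theorem card_filter_countBetween_lt_le (C : Finset γ) (g : ℕ) :
    #{p ∈ C ×ˢ C | p.1 < p.2 ∧ countBetween C p < g} ≤ #C * g := by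
  calc _ ≤ #(C ×ˢ range g) := ?_
    _ = #C * g := by rw [card_product, card_range]
  refine card_le_card_of_injOn (fun p => (p.1, countBetween C p)) (fun p hp => ?_) ?_
  · simp only [coe_filter, mem_product, Set.mem_ofPred_eq] at hp
    simp only [coe_product, Set.mem_prod, mem_coe, mem_range]
    exact ⟨hp.1.1, hp.2.2⟩
  · rintro ⟨u, v⟩ hp ⟨u', v'⟩ hp' heq
    simp only [coe_filter, mem_product, Set.mem_ofPred_eq] at hp hp'
    simp only [Prod.mk.injEq] at heq
    obtain ⟨rfl, hcount⟩ := heq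
    rcases lt_trichotomy v v' with hlt | rfl | hlt
    · exact absurd hcount (countBetween_lt_countBetween hp.1.2 hp.2.1 hlt).ne
    · rfl
    · exact absurd hcount (countBetween_lt_countBetween hp'.1.2 hp'.2.1 hlt).ne'

def gapEnds (a : Fin (L + 1) → γ) (i : Fin L) : γ × γ := (a i.castSucc, a i.succ)

theorem sum_countBetween_le {a : Fin (L + 1) → γ} (ha : Monotone a) (C : Finset γ) :
    ∑ i, countBetween C (gapEnds a i) ≤ #C := by
  have hdisj : ((univ : Finset (Fin L)) : Set (Fin L)).PairwiseDisjoint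
      fun i => {c ∈ C | (gapEnds a i).1 < c ∧ c < (gapEnds a i).2} := by
    intro i _ j _ hij
    simp only [Function.onFun, disjoint_left, mem_filter]
    intro c hci hcj
    rcases hij.lt_or_gt with h | h
    · exact lt_irrefl c <| (hci.2.2.trans_le (ha (Fin.succ_le_castSucc_iff.mpr h))).trans hcj.2.1
    · exact lt_irrefl c <| (hcj.2.2.trans_le (ha (Fin.succ_le_castSucc_iff.mpr h))).trans hci.2.1
  simp only [countBetween]
  rw [← card_biUnion hdisj]
  exact card_le_card (biUnion_subset.mpr fun i _ => filter_subset _ _)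

theorem card_mul_le_two_mul_card_filter_countBetween_lt {w : ι → Fin (L + 1) → γ}
    {R : Finset ι} (hmono : ∀ r ∈ R, Monotone (w r)) {C : Finset γ} {g : ℕ}
    (hg : 2 * #C < g * L) :
    #R * L ≤ 2 * #{q ∈ R ×ˢ univ | countBetween C (gapEnds (w q.1) q.2) < g} := by
  have hrow : ∀ r ∈ R, L ≤ 2 * #{i | countBetween C (gapEnds (w r) i) < g} := fun r hr => by
    simpa using card_le_two_mul_card_filter_lt (s := univ) <|
      (Nat.mul_le_mul_left 2 (sum_countBetween_le (hmono r hr) C)).trans_lt (by simpa using hg)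
  calc #R * L = ∑ _r ∈ R, L := by simp
    _ ≤ ∑ r ∈ R, 2 * #{i | countBetween C (gapEnds (w r) i) < g} := sum_le_sum hrow
    _ = _ := by simp only [← mul_sum, card_filter, sum_product]

theorem sq_card_mul_pow_three_le (w : ι → Fin (L + 1) → γ) (R : Finset ι)
    (hmono : ∀ r ∈ R, StrictMono (w r)) :
    #R ^ 2 * L ^ 3 ≤ 12 * #(image₂ w R univ) ^ 2 * #(coincidences (fun r => gapEnds (w r)) R) := by
  set C := image₂ w R univ
  rcases R.eq_empty_or_nonempty with rfl | ⟨r₀, hr₀⟩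
  · simp
  rcases L.eq_zero_or_pos with rfl | hL
  · simp
  have hLC : L + 1 ≤ #C := by
    simpa using card_le_card_image₂_left univ hr₀ (hmono r₀ hr₀).injective
  obtain ⟨g, hg, hgL⟩ := exists_two_mul_lt_mul_le_three_mul hL (by omega : L ≤ #C)
  set good := {q ∈ R ×ˢ (univ : Finset (Fin L)) | countBetween C (gapEnds (w q.1) q.2) < g}
  set P := {p ∈ C ×ˢ C | p.1 < p.2 ∧ countBetween C p < g}
  have hgood : #R * L ≤ 2 * #good :=
    card_mul_le_two_mul_card_filter_countBetween_lt (fun r hr => (hmono r hr).monotone) hg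
  have hmaps : Set.MapsTo (fun q : ι × Fin L => gapEnds (w q.1) q.2) good P := by
    intro q hq
    simp only [good, coe_filter, mem_product, Set.mem_ofPred_eq] at hq
    simp only [P, coe_filter, mem_product, Set.mem_ofPred_eq]
    exact ⟨⟨mem_image₂_of_mem hq.1.1 (mem_univ _), mem_image₂_of_mem hq.1.1 (mem_univ _)⟩,
      hmono _ hq.1.1 Fin.castSucc_lt_succ, hq.2⟩
  set E := coincidences (fun r => gapEnds (w r)) R
  have hE : #{q ∈ good ×ˢ good | gapEnds (w q.1.1) q.1.2 = gapEnds (w q.2.1) q.2.2} ≤ #E :=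
    card_le_card <| filter_subset_filter _ <|
      product_subset_product (filter_subset _ _) (filter_subset _ _)
  calc #R ^ 2 * L ^ 3 = L * (#R * L) ^ 2 := by ring
    _ ≤ L * (2 * #good) ^ 2 := by gcongr
    _ = 4 * L * #good ^ 2 := by ring
    _ ≤ 4 * L * (#P * #E) :=
        Nat.mul_le_mul_left _ ((sq_card_le_card_mul_card_filter_eq hmaps).trans
          (Nat.mul_le_mul_left _ hE))
    _ ≤ 4 * L * (#C * g * #E) := by gcongr; exact card_filter_countBetween_lt_le C g
    _ = 4 * #C * (g * L) * #E := by ring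
    _ ≤ 4 * #C * (3 * #C) * #E := by gcongr
    _ = 12 * #C ^ 2 * #E := by ring

end Gaps

def mulMulAdd (x y : ℝ) : ℝ := x * y * (x + y)

theorem mulMulAdd_comm (x y : ℝ) : mulMulAdd x y = mulMulAdd y x := by
  unfold mulMulAdd; ring

theorem mulMulAdd_neg_neg (x y : ℝ) : mulMulAdd (-x) (-y) = -mulMulAdd x y := by
  unfold mulMulAdd; ring

theorem mulMulAdd_sub_mulMulAdd (r s t : ℝ) :
    mulMulAdd r t - mulMulAdd r s = r * (t - s) * (r + s + t) := by
  unfold mulMulAdd; ring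

theorem add_add_eq_zero_of_mulMulAdd_eq {x y b : ℝ} (hb : b ≠ 0) (hxy : x ≠ y)
    (h : mulMulAdd x b = mulMulAdd y b) : x + y + b = 0 := by
  have := mulMulAdd_sub_mulMulAdd b y x
  rw [mulMulAdd_comm b x, mulMulAdd_comm b y, h, sub_self] at this
  have := (mul_eq_zero.mp this.symm).resolve_left (mul_ne_zero hb (sub_ne_zero.mpr hxy))
  linarith

theorem card_filter_mulMulAdd_eq_le_two {b : ℝ} (hb : b ≠ 0) (R : Finset ℝ) (v : ℝ) :
    #{x ∈ R | mulMulAdd x b = v} ≤ 2 := by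
  by_contra! h
  obtain ⟨x, hx, y, hy, z, hz, hxy, hxz, hyz⟩ := two_lt_card.mp h
  simp only [mem_filter] at hx hy hz
  have hxy' := add_add_eq_zero_of_mulMulAdd_eq hb hxy (hx.2.trans hy.2.symm)
  have hxz' := add_add_eq_zero_of_mulMulAdd_eq hb hxz (hx.2.trans hz.2.symm)
  exact hyz (by linarith)

theorem card_le_two_mul_card_image₂_mulMulAdd {b : ℝ} {B : Finset ℝ} (hbB : b ∈ B) (hb : b ≠ 0)
    (R : Finset ℝ) : #R ≤ 2 * #(image₂ mulMulAdd R B) :=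
  calc #R ≤ 2 * #(R.image (mulMulAdd · b)) :=
        card_le_mul_card_image R 2 fun v _ => card_filter_mulMulAdd_eq_le_two hb R v
    _ ≤ 2 * #(image₂ mulMulAdd R B) := by
        gcongr
        exact image_subset_iff.mpr fun x hx => mem_image₂_of_mem hx hbB

theorem eq_of_mulMulAdd_eq_of_mulMulAdd_eq {x y b b' : ℝ} (hb : b ≠ 0) (hb' : b' ≠ 0)
    (hbb' : b ≠ b') (h : mulMulAdd x b = mulMulAdd y b) (h' : mulMulAdd x b' = mulMulAdd y b') :
    x = y := by
  by_contra hxy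
  have := add_add_eq_zero_of_mulMulAdd_eq hb hxy h
  have := add_add_eq_zero_of_mulMulAdd_eq hb' hxy h'
  exact hbb' (by linarith)

theorem image₂_mulMulAdd_neg_neg (A B : Finset ℝ) :
    image₂ mulMulAdd (-A) (-B) = -image₂ mulMulAdd A B := by
  ext v
  simp only [mem_image₂, mem_neg']
  constructor
  · rintro ⟨a, ha, b, hb, rfl⟩
    exact ⟨-a, ha, -b, hb, mulMulAdd_neg_neg a b⟩
  · rintro ⟨a, ha, b, hb, hv⟩
    exact ⟨-a, by rwa [neg_neg], -b, by rwa [neg_neg], by rw [mulMulAdd_neg_neg, hv, neg_neg]⟩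

theorem card_image₂_mulMulAdd_neg_comm (A B : Finset ℝ) :
    #(image₂ mulMulAdd B (-A)) = #(image₂ mulMulAdd A (-B)) := by
  rw [image₂_swap, show (fun a b => mulMulAdd b a) = mulMulAdd from
      funext₂ fun _ _ => mulMulAdd_comm _ _, ← neg_neg B, image₂_mulMulAdd_neg_neg, neg_neg,
    card_neg]

theorem mul_eq_of_mulMulAdd_eq {x y b b' c c' : ℝ} (h : mulMulAdd x b = mulMulAdd y c)
    (h' : mulMulAdd x b' = mulMulAdd y c') :
    b * b' * (b - b') * x = (b' * c - b * c') * y ^ 2 + (b' * c ^ 2 - b * c' ^ 2) * y := by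
  unfold mulMulAdd at h h'
  linear_combination b' * h - b * h'

theorem card_le_four_of_mulMulAdd_eq {b b' c c' : ℝ} (hb : b ≠ 0) (hb' : b' ≠ 0) (hc : c ≠ 0)
    (hbb' : b ≠ b') (hne : (b, b') ≠ (c, c')) (T : Finset (ℝ × ℝ))
    (hT : ∀ p ∈ T, mulMulAdd p.1 b = mulMulAdd p.2 c ∧ mulMulAdd p.1 b' = mulMulAdd p.2 c') :
    #T ≤ 4 := by
  set γ := b * b' * (b - b')
  set α := b' * c - b * c'
  set β := b' * c ^ 2 - b * c' ^ 2
  have hγ : γ ≠ 0 := mul_ne_zero (mul_ne_zero hb hb') (sub_ne_zero.mpr hbb')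
  have hline : ∀ p ∈ T, γ * p.1 = α * p.2 ^ 2 + β * p.2 := fun p hp =>
    mul_eq_of_mulMulAdd_eq (hT p hp).1 (hT p hp).2
  -- substituting `γ x = α y² + β y` into `γ² (f x b - f y c) = 0`
  set F : ℝ[X] := C (b * α ^ 2) * X ^ 4 + C (2 * b * α * β) * X ^ 3 +
    C (b * β ^ 2 + b ^ 2 * γ * α - γ ^ 2 * c) * X ^ 2 + C (b ^ 2 * γ * β - γ ^ 2 * c ^ 2) * X
  have hroot : ∀ p ∈ T, F.IsRoot p.2 := fun p hp => by
    obtain ⟨h, -⟩ := hT p hp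
    unfold mulMulAdd at h
    simp only [F, IsRoot, eval_add, eval_mul, eval_pow, eval_C, eval_X]
    linear_combination γ ^ 2 * h -
      (b * (α * p.2 ^ 2 + β * p.2 + γ * p.1) + b ^ 2 * γ) * hline p hp
  have hF : F ≠ 0 := by
    intro hF0
    have h4 : F.coeff 4 = b * α ^ 2 := by
      simp only [F, coeff_add, coeff_C_mul, coeff_X_pow, coeff_X]; norm_num
    have h2 : F.coeff 2 = b * β ^ 2 + b ^ 2 * γ * α - γ ^ 2 * c := by
      simp only [F, coeff_add, coeff_C_mul, coeff_X_pow, coeff_X]; norm_num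
    rw [hF0, coeff_zero, eq_comm] at h4 h2
    -- `α = 0` makes `(c, c')` proportional to `(b, b')`; the `X²` coefficient then forces `c = b`
    have hα : α = 0 := by simpa [hb] using h4
    have hβ : b ^ 2 * β = c ^ 2 * γ := by linear_combination b * (b * c' + b' * c) * hα
    have hcb : c = b := by
      have : b * γ ^ 2 * c * (c ^ 3 - b ^ 3) = 0 := by
        linear_combination b ^ 4 * h2 - b * (b ^ 2 * β + c ^ 2 * γ) * hβ - b ^ 6 * γ * hα
      have := (mul_eq_zero.mp this).resolve_left (by positivity)
      exact (Odd.pow_inj (by decide)).mp (sub_eq_zero.mp this)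
    have hc' : c' = b' := mul_left_cancel₀ hb (by linear_combination -hα + b' * hcb)
    exact hne (Prod.ext hcb.symm hc'.symm)
  have hinj : Set.InjOn Prod.snd (T : Set (ℝ × ℝ)) := fun p hp q hq (hpq : p.2 = q.2) =>
    Prod.ext (mul_left_cancel₀ hγ (by rw [hline p hp, hline q hq, hpq])) hpq
  calc #T = #(T.image Prod.snd) := (card_image_of_injOn hinj).symm
    _ ≤ F.natDegree := card_le_degree_of_subset_roots fun y hy => by
        obtain ⟨p, hp, rfl⟩ := mem_image.mp hy
        exact (mem_roots hF).mpr (hroot p hp)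
    _ ≤ 4 := by simp only [F]; compute_degree

theorem sq_card_mul_sq_le_of_strictMono {L : ℕ} (e : Fin (L + 1) → ℝ)
    (he : Function.Injective e) (he0 : ∀ i, e i ≠ 0) (R : Finset ℝ)
    (hmono : ∀ r ∈ R, StrictMono fun i => mulMulAdd r (e i)) :
    #R ^ 2 * (L + 1) ^ 2 ≤ 288 * #(image₂ mulMulAdd R (univ.image e)) ^ 3 := by
  set w := fun r i => mulMulAdd r (e i)
  set K := #(image₂ mulMulAdd R (univ.image e))
  have hC : image₂ w R univ = image₂ mulMulAdd R (univ.image e) := (image₂_image_right _ _).symm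
  have hN : #R ≤ 2 * K :=
    card_le_two_mul_card_image₂_mulMulAdd (mem_image_of_mem e (mem_univ 0)) (he0 0) R
  have hne : ∀ i : Fin L, e i.castSucc ≠ e i.succ := fun i h => Fin.castSucc_lt_succ.ne (he h)
  have hE := card_coincidences_le (fun r => gapEnds (w r)) R 4
    (fun i r _ r' _ h => eq_of_mulMulAdd_eq_of_mulMulAdd_eq (he0 _) (he0 _) (hne i)
      (Prod.ext_iff.mp h).1 (Prod.ext_iff.mp h).2)
    fun i j hij => card_le_four_of_mulMulAdd_eq (he0 _) (he0 _) (he0 _) (hne i)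
      (fun h => hij (Fin.castSucc_injective _ (he (Prod.ext_iff.mp h).1)))
      _ fun p hp => Prod.ext_iff.mp (mem_filter.mp hp).2
  have hgrid := (sq_card_mul_pow_three_le w R hmono).trans (Nat.mul_le_mul_left _ hE)
  rw [hC, Fintype.card_fin] at hgrid
  rcases R.eq_empty_or_nonempty with rfl | ⟨r₀, hr₀⟩
  · simp
  have hLK : L + 1 ≤ K := by
    simpa [hC] using card_le_card_image₂_left (f := w) univ hr₀ (hmono r₀ hr₀).injective
  rcases L.eq_zero_or_pos with rfl | hL
  · have hK : K ^ 2 ≤ K ^ 3 := Nat.pow_le_pow_right (by omega) (by norm_num)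
    calc #R ^ 2 * (0 + 1) ^ 2 ≤ (2 * K) ^ 2 := by simpa using Nat.pow_le_pow_left hN 2
      _ ≤ 288 * K ^ 3 := by nlinarith
  have hcancel : #R ^ 2 * L ^ 2 * L ≤ 72 * K ^ 3 * L :=
    calc #R ^ 2 * L ^ 2 * L = #R ^ 2 * L ^ 3 := by ring
      _ ≤ 12 * K ^ 2 * (L * #R + 4 * L ^ 2) := hgrid
      _ ≤ 12 * K ^ 2 * (6 * K * L) := by gcongr; nlinarith
      _ = 72 * K ^ 3 * L := by ring
  calc #R ^ 2 * (L + 1) ^ 2 ≤ #R ^ 2 * (2 * L) ^ 2 := by gcongr; omega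
    _ = 4 * (#R ^ 2 * L ^ 2) := by ring
    _ ≤ 4 * (72 * K ^ 3) := Nat.mul_le_mul_left 4 (Nat.le_of_mul_le_mul_right hcancel hL)
    _ = 288 * K ^ 3 := by ring

theorem sq_card_mul_sq_card_le_of_pos {R S : Finset ℝ} (hR : ∀ r ∈ R, 0 < r)
    (hS : ∀ s ∈ S, 0 < s) : #R ^ 2 * #S ^ 2 ≤ 288 * #(image₂ mulMulAdd R S) ^ 3 := by
  rcases S.eq_empty_or_nonempty with rfl | hSne
  · simp
  obtain ⟨L, hL⟩ := Nat.exists_eq_add_one.mpr (card_pos.mpr hSne)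
  set s := S.orderEmbOfFin hL
  have hmono : ∀ r ∈ R, StrictMono fun i => mulMulAdd r (s i) := fun r hr i j hij => by
    have hi := hS _ (S.orderEmbOfFin_mem hL i)
    have hj := hS _ (S.orderEmbOfFin_mem hL j)
    rw [← sub_pos, mulMulAdd_sub_mulMulAdd]
    exact mul_pos (mul_pos (hR r hr) (sub_pos.mpr (s.strictMono hij))) (by linarith [hR r hr])
  have := sq_card_mul_sq_le_of_strictMono s s.injective
    (fun i => (hS _ (S.orderEmbOfFin_mem hL i)).ne') R hmono
  rwa [image_orderEmbOfFin_univ, ← hL] at this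

theorem sq_card_mul_sq_card_le_of_le {R S : Finset ℝ} (hR : ∀ r ∈ R, 0 < r)
    (hS : ∀ s ∈ S, 0 < s) (hRS : ∀ r ∈ R, ∀ s ∈ S, r ≤ s) :
    #R ^ 2 * #S ^ 2 ≤ 288 * #(image₂ mulMulAdd R (-S)) ^ 3 := by
  rcases S.eq_empty_or_nonempty with rfl | hSne
  · simp
  obtain ⟨L, hL⟩ := Nat.exists_eq_add_one.mpr (card_pos.mpr hSne)
  set s := S.orderEmbOfFin hL
  have hmono : ∀ r ∈ R, StrictMono fun i => mulMulAdd r (-s i) := fun r hr i j hij => by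
    have hi := hS _ (S.orderEmbOfFin_mem hL i)
    have hri := hRS r hr _ (S.orderEmbOfFin_mem hL i)
    have hsub : 0 < s j - s i := sub_pos.mpr (s.strictMono hij)
    rw [← sub_pos, mulMulAdd_sub_mulMulAdd]
    nlinarith [mul_pos (mul_pos (hR r hr) hsub) (by linarith : 0 < s i + s j - r)]
  have := sq_card_mul_sq_le_of_strictMono (fun i => -s i) (neg_injective.comp s.injective)
    (fun i => neg_ne_zero.mpr (hS _ (S.orderEmbOfFin_mem hL i)).ne') R hmono
  have himage : univ.image (fun i => -s i) = -S := by
    rw [← image_neg_eq_neg, ← image_orderEmbOfFin_univ S hL, image_image]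
    rfl
  rwa [himage, ← hL] at this

theorem sq_card_mul_sq_card_le_image₂_neg {X Y : Finset ℝ} (hX : ∀ x ∈ X, 0 < x)
    (hY : ∀ y ∈ Y, 0 < y) : #X ^ 2 * #Y ^ 2 ≤ 4608 * #(image₂ mulMulAdd X (-Y)) ^ 3 := by
  rcases X.eq_empty_or_nonempty with rfl | hXne
  · simp
  obtain ⟨θ, hlo, hhi⟩ := exists_median hXne
  have hYsplit : #Y ≤ 2 * #{y ∈ Y | θ ≤ y} ∨ #Y ≤ 2 * #{y ∈ Y | y ≤ θ} := by
    have := card_filter_add_card_filter_not (s := Y) (θ ≤ ·)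
    have : #{y ∈ Y | ¬θ ≤ y} ≤ #{y ∈ Y | y ≤ θ} := card_le_card fun y hy => by
      simp only [mem_filter] at hy ⊢
      exact ⟨hy.1, (not_le.mp hy.2).le⟩
    omega
  have hpos : ∀ {Z : Finset ℝ} {p : ℝ → Prop} [DecidablePred p], (∀ z ∈ Z, 0 < z) →
      ∀ z ∈ Z.filter p, 0 < z := fun hZ z hz => hZ z (mem_of_mem_filter z hz)
  rcases hYsplit with hY' | hY'
  · calc #X ^ 2 * #Y ^ 2 ≤ 16 * (#{x ∈ X | x ≤ θ} ^ 2 * #{y ∈ Y | θ ≤ y} ^ 2) :=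
          sq_mul_sq_le_sixteen_mul hlo hY'
      _ ≤ 16 * (288 * #(image₂ mulMulAdd {x ∈ X | x ≤ θ} (-{y ∈ Y | θ ≤ y})) ^ 3) :=
          Nat.mul_le_mul_left 16 <| sq_card_mul_sq_card_le_of_le (hpos hX) (hpos hY)
            fun r hr s hs => le_trans (mem_filter.mp hr).2 (mem_filter.mp hs).2
      _ = 4608 * #(image₂ mulMulAdd {x ∈ X | x ≤ θ} (-{y ∈ Y | θ ≤ y})) ^ 3 := by ring
      _ ≤ 4608 * #(image₂ mulMulAdd X (-Y)) ^ 3 := by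
          gcongr <;> apply filter_subset
  · calc #X ^ 2 * #Y ^ 2 ≤ 16 * (#{y ∈ Y | y ≤ θ} ^ 2 * #{x ∈ X | θ ≤ x} ^ 2) := by
          rw [mul_comm (#X ^ 2)]; exact sq_mul_sq_le_sixteen_mul hY' hhi
      _ ≤ 16 * (288 * #(image₂ mulMulAdd {y ∈ Y | y ≤ θ} (-{x ∈ X | θ ≤ x})) ^ 3) :=
          Nat.mul_le_mul_left 16 <| sq_card_mul_sq_card_le_of_le (hpos hY) (hpos hX)
            fun r hr s hs => le_trans (mem_filter.mp hr).2 (mem_filter.mp hs).2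
      _ = 4608 * #(image₂ mulMulAdd {x ∈ X | θ ≤ x} (-{y ∈ Y | y ≤ θ})) ^ 3 := by
          rw [card_image₂_mulMulAdd_neg_comm]; ring
      _ ≤ 4608 * #(image₂ mulMulAdd X (-Y)) ^ 3 := by
          gcongr <;> apply filter_subset

theorem sq_card_mul_sq_card_le_of_sign {A B : Finset ℝ}
    (hA : (∀ a ∈ A, 0 < a) ∨ ∀ a ∈ A, a < 0) (hB : (∀ b ∈ B, 0 < b) ∨ ∀ b ∈ B, b < 0) :
    #A ^ 2 * #B ^ 2 ≤ 4608 * #(image₂ mulMulAdd A B) ^ 3 := by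
  wlog hpos : ∀ a ∈ A, 0 < a generalizing A B
  · have hpos' : ∀ a ∈ -A, 0 < a := fun a ha =>
      neg_lt_zero.mp (hA.resolve_left hpos _ (mem_neg'.mp ha))
    have := this (A := -A) (B := -B) (Or.inl hpos')
      (hB.symm.imp (fun h b hb => neg_lt_zero.mp (h _ (mem_neg'.mp hb)))
        fun h b hb => neg_pos.mp (h _ (mem_neg'.mp hb))) hpos'
    rwa [card_neg, card_neg, image₂_mulMulAdd_neg_neg, card_neg] at this
  rcases hB with hB | hB
  · exact (sq_card_mul_sq_card_le_of_pos hpos hB).trans (by gcongr; norm_num)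
  · have := sq_card_mul_sq_card_le_image₂_neg hpos (Y := -B)
      fun y hy => neg_lt_zero.mp (hB _ (mem_neg'.mp hy))
    rwa [neg_neg, card_neg] at this

theorem exists_subset_card_le_two_mul_of_ne_zero {A : Finset ℝ} (hA : ∀ a ∈ A, a ≠ 0) :
    ∃ A' ⊆ A, #A ≤ 2 * #A' ∧ ((∀ a ∈ A', 0 < a) ∨ ∀ a ∈ A', a < 0) := by
  have := card_filter_add_card_filter_not (s := A) fun a => 0 < a
  by_cases h : #{a ∈ A | ¬0 < a} ≤ #{a ∈ A | 0 < a}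
  · exact ⟨{a ∈ A | 0 < a}, filter_subset _ _, by omega, Or.inl fun a ha => (mem_filter.mp ha).2⟩
  · refine ⟨{a ∈ A | ¬0 < a}, filter_subset _ _, by omega, Or.inr fun a ha => ?_⟩
    obtain ⟨haA, ha⟩ := mem_filter.mp ha
    exact (not_lt.mp ha).lt_of_ne (hA a haA)

theorem inv_mul_rpow_mul_rpow_le {a b c K : ℝ} (ha : 0 ≤ a) (hb : 0 ≤ b) (hc : 0 < c)
    (hK : 0 ≤ K) (h : a ^ 2 * b ^ 2 ≤ (c * K) ^ 3) :
    c⁻¹ * a ^ (2 / 3 : ℝ) * b ^ (2 / 3 : ℝ) ≤ K := by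
  have hcube : (a ^ (2 / 3 : ℝ) * b ^ (2 / 3 : ℝ)) ^ 3 = a ^ 2 * b ^ 2 := by
    rw [mul_pow, ← Real.rpow_mul_natCast ha, ← Real.rpow_mul_natCast hb]
    norm_num
  rw [mul_assoc, inv_mul_le_iff₀ hc]
  exact (pow_le_pow_iff_left₀ (by positivity) (by positivity) three_ne_zero).mp (hcube ▸ h)

/-- Proposition 7.2: there is an absolute `κ > 0` such that for `f(x,y) = xy(x+y)` and
all nonempty finite sets `A, B` of nonzero reals, `|f(A,B)| ≥ κ·|A|^{2/3}·|B|^{2/3}`. -/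
theorem stmt_18 : ∃ κ : ℝ, 0 < κ ∧ ∀ A B : Finset ℝ, A.Nonempty → B.Nonempty →
    (∀ a ∈ A, a ≠ 0) → (∀ b ∈ B, b ≠ 0) →
      ((Finset.image₂ (fun x y => x * y * (x + y)) A B).card : ℝ) ≥
        κ * (A.card : ℝ) ^ ((2 : ℝ) / 3) * (B.card : ℝ) ^ ((2 : ℝ) / 3) := by
  refine ⟨50⁻¹, by norm_num, fun A B _ _ hA hB => ?_⟩
  obtain ⟨A', hA'A, hAA', hA'⟩ := exists_subset_card_le_two_mul_of_ne_zero hA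
  obtain ⟨B', hB'B, hBB', hB'⟩ := exists_subset_card_le_two_mul_of_ne_zero hB
  have hcount : #A ^ 2 * #B ^ 2 ≤ 73728 * #(image₂ mulMulAdd A B) ^ 3 :=
    calc #A ^ 2 * #B ^ 2 ≤ 16 * (#A' ^ 2 * #B' ^ 2) := sq_mul_sq_le_sixteen_mul hAA' hBB'
      _ ≤ 16 * (4608 * #(image₂ mulMulAdd A' B') ^ 3) :=
          Nat.mul_le_mul_left 16 (sq_card_mul_sq_card_le_of_sign hA' hB')
      _ = 73728 * #(image₂ mulMulAdd A' B') ^ 3 := by ring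
      _ ≤ 73728 * #(image₂ mulMulAdd A B) ^ 3 := by gcongr
  change _ ≤ ((image₂ mulMulAdd A B).card : ℝ)
  refine inv_mul_rpow_mul_rpow_le (Nat.cast_nonneg _) (Nat.cast_nonneg _) (by norm_num)
    (Nat.cast_nonneg _) ?_
  have : (#A : ℝ) ^ 2 * #B ^ 2 ≤ 73728 * #(image₂ mulMulAdd A B) ^ 3 := by exact_mod_cast hcount
  nlinarith [pow_nonneg (Nat.cast_nonneg (α := ℝ) #(image₂ mulMulAdd A B)) 3]
end

section
/- Let a, b, c, d be real numbers with (a, b) ≠ (c, d), a³ ≠ b³, and c³ ≠ d³. Then the set of pairs (y, y') of nonzero real numbers satisfying simultaneously a·y² + a²·y = b·y'² + b²·y' and c·y² + c²·y = d·y'² + d²·y' has at most 3 elements. -/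
/-!
Away from the degenerate cases `a = 0`, `c = 0`, `a = c`, eliminating `y` between the two curve
equations shows that `y` is a rational function of `y'` and that `y'` is a root of a cubic, which
does not vanish identically because `a³ ≠ b³`. In the degenerate cases one curve equation pins
`y'` to a single value and the other becomes a nontrivial quadratic equation in `y`.
-/

theorem Cubic.encard_le_three_of_subset_image {R α : Type*} [CommRing R] [IsDomain R]
    {P : Cubic R} (hP : P.toPoly ≠ 0) {S : Set α} {g : R → α}
    (hS : ∀ s ∈ S, ∃ x, P.a * x ^ 3 + P.b * x ^ 2 + P.c * x + P.d = 0 ∧ g x = s) :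
    S.encard ≤ 3 := by
  classical
  have hsub : S ⊆ g '' P.roots.toFinset := fun s hs => by
    obtain ⟨x, hx, rfl⟩ := hS s hs
    exact ⟨x, by simpa [Cubic.mem_roots_iff hP] using hx, rfl⟩
  calc S.encard ≤ (g '' P.roots.toFinset).encard := Set.encard_le_encard hsub
    _ ≤ P.roots.toFinset.card := by simpa using Set.encard_image_le g (P.roots.toFinset : Set R)
    _ ≤ 3 := by exact_mod_cast P.card_roots_le

def nonzeroMeet (a b c d : ℝ) : Set (ℝ × ℝ) :=
  {p | p.1 ≠ 0 ∧ p.2 ≠ 0 ∧ a * p.1 ^ 2 + a ^ 2 * p.1 = b * p.2 ^ 2 + b ^ 2 * p.2 ∧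
    c * p.1 ^ 2 + c ^ 2 * p.1 = d * p.2 ^ 2 + d ^ 2 * p.2}

theorem nonzeroMeet_comm (a b c d : ℝ) : nonzeroMeet a b c d = nonzeroMeet c d a b := by
  simp only [nonzeroMeet, and_comm]

theorem eq_neg_of_mul_sq_add_sq_mul_eq_zero {R : Type*} [CommRing R] [IsDomain R] {b t : R}
    (hb : b ≠ 0) (ht : t ≠ 0) (h : b * t ^ 2 + b ^ 2 * t = 0) : t = -b := by
  have : b * t * (t + b) = 0 := by linear_combination h
  simpa [hb, ht, add_eq_zero_iff_eq_neg] using this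

theorem encard_nonzeroMeet_zero_left_le {b c d : ℝ} (hb : b ≠ 0) (hcd : (c, d) ≠ (0, 0))
    (hne : ((0 : ℝ), b) ≠ (c, d)) : (nonzeroMeet 0 b c d).encard ≤ 3 := by
  have hP : (⟨0, c, c ^ 2, d ^ 2 * b - d * b ^ 2⟩ : Cubic ℝ).toPoly ≠ 0 := by
    rcases eq_or_ne c 0 with rfl | hc
    · have hd : d ≠ 0 := by simpa using hcd
      have hbd : d - b ≠ 0 := sub_ne_zero.mpr (by simpa [eq_comm] using hne)
      apply Cubic.ne_zero_of_d_ne_zero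
      rw [show d ^ 2 * b - d * b ^ 2 = d * b * (d - b) by ring]
      exact mul_ne_zero (mul_ne_zero hd hb) hbd
    · exact Cubic.ne_zero_of_b_ne_zero hc
  refine Cubic.encard_le_three_of_subset_image hP (g := fun y => (y, -b)) ?_
  rintro ⟨y, t⟩ ⟨-, ht, h₁, h₂⟩
  obtain rfl : t = -b := eq_neg_of_mul_sq_add_sq_mul_eq_zero hb ht (by linear_combination -h₁)
  exact ⟨y, by linear_combination h₂, rfl⟩

theorem encard_nonzeroMeet_same_left_le {a b d : ℝ} (ha : a ≠ 0) (hbd : b ≠ d) :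
    (nonzeroMeet a b a d).encard ≤ 3 := by
  refine Cubic.encard_le_three_of_subset_image (P := ⟨0, a, a ^ 2, -(b * d * (b + d))⟩)
    (Cubic.ne_zero_of_b_ne_zero ha) (g := fun y => (y, -(b + d))) ?_
  rintro ⟨y, t⟩ ⟨-, ht, h₁, h₂⟩
  have : (b - d) * t * (t + (b + d)) = 0 := by linear_combination h₂ - h₁
  obtain rfl : t = -(b + d) := by
    simpa [sub_eq_zero, hbd, ht, add_eq_zero_iff_eq_neg] using this
  exact ⟨y, by linear_combination h₁, rfl⟩
section Elimination

variable {a b c d y t : ℝ}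

/-- With `e = a c (a - c)`, `A = c b - a d`, `B = c b² - a d²`, `C = c² b - a² d`,
`D = c² b² - a² d²`, the two curve equations give `e y = A t² + B t` and `e y² = -(C t² + D t)`;
eliminating `y` leaves `t` times this cubic in `t`. -/
def eliminant (a b c d : ℝ) : Cubic ℝ :=
  ⟨(c * b - a * d) ^ 2, 2 * (c * b - a * d) * (c * b ^ 2 - a * d ^ 2),
    (c * b ^ 2 - a * d ^ 2) ^ 2 + a * c * (a - c) * (c ^ 2 * b - a ^ 2 * d),
    a * c * (a - c) * (c ^ 2 * b ^ 2 - a ^ 2 * d ^ 2)⟩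

theorem mul_fst_eq_of_mem_curves (h₁ : a * y ^ 2 + a ^ 2 * y = b * t ^ 2 + b ^ 2 * t)
    (h₂ : c * y ^ 2 + c ^ 2 * y = d * t ^ 2 + d ^ 2 * t) :
    a * c * (a - c) * y = (c * b - a * d) * t ^ 2 + (c * b ^ 2 - a * d ^ 2) * t := by
  linear_combination c * h₁ - a * h₂

theorem eliminant_eval_eq_zero (ht : t ≠ 0)
    (h₁ : a * y ^ 2 + a ^ 2 * y = b * t ^ 2 + b ^ 2 * t)
    (h₂ : c * y ^ 2 + c ^ 2 * y = d * t ^ 2 + d ^ 2 * t) :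
    (eliminant a b c d).a * t ^ 3 + (eliminant a b c d).b * t ^ 2 + (eliminant a b c d).c * t
      + (eliminant a b c d).d = 0 := by
  have hlin := mul_fst_eq_of_mem_curves h₁ h₂
  have hquad : a * c * (a - c) * y ^ 2 =
      -((c ^ 2 * b - a ^ 2 * d) * t ^ 2 + (c ^ 2 * b ^ 2 - a ^ 2 * d ^ 2) * t) := by
    linear_combination a ^ 2 * h₂ - c ^ 2 * h₁
  have : t * ((eliminant a b c d).a * t ^ 3 + (eliminant a b c d).b * t ^ 2
      + (eliminant a b c d).c * t + (eliminant a b c d).d) = 0 := by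
    simp only [eliminant]
    linear_combination
      -(a * c * (a - c) * y + (c * b - a * d) * t ^ 2 + (c * b ^ 2 - a * d ^ 2) * t) * hlin
        + a * c * (a - c) * hquad
  exact (mul_eq_zero.mp this).resolve_left ht

theorem eliminant_toPoly_ne_zero (ha : a ≠ 0) (hc : c ≠ 0) (hac : a ≠ c) (hab : a ^ 3 ≠ b ^ 3)
    (hAB : ¬(c * b - a * d = 0 ∧ c * b ^ 2 - a * d ^ 2 = 0)) : (eliminant a b c d).toPoly ≠ 0 := by
  rcases ne_or_eq (c * b - a * d) 0 with hA | hA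
  · exact Cubic.ne_zero_of_a_ne_zero (pow_ne_zero 2 hA)
  -- `A = 0` says that `(b, d)` is a multiple `l • (a, c)`; then `A`, `B`, `C` are explicit in `l`.
  obtain ⟨l, rfl⟩ : ∃ l, b = l * a := ⟨b / a, by field_simp⟩
  obtain rfl : d = l * c := by
    have : a * (l * c - d) = 0 := by linear_combination hA
    linear_combination -(mul_eq_zero.mp this).resolve_left ha
  have hl : l ≠ 0 := by
    rintro rfl
    simp at hAB
  have hl3 : l ^ 3 - 1 ≠ 0 := fun h => hab (by linear_combination -a ^ 3 * h)
  apply Cubic.ne_zero_of_c_ne_zero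
  simp only [eliminant]
  rw [show (c * (l * a) ^ 2 - a * (l * c) ^ 2) ^ 2
      + a * c * (a - c) * (c ^ 2 * (l * a) - a ^ 2 * (l * c))
      = a ^ 2 * c ^ 2 * (a - c) ^ 2 * l * (l ^ 3 - 1) by ring]
  have := sub_ne_zero.mpr hac
  positivity

theorem nonzeroMeet_eq_empty (ha : a ≠ 0) (hc : c ≠ 0) (hac : a ≠ c) (hA : c * b - a * d = 0)
    (hB : c * b ^ 2 - a * d ^ 2 = 0) : nonzeroMeet a b c d = ∅ := by
  refine Set.eq_empty_of_forall_notMem ?_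
  rintro ⟨y, t⟩ ⟨hy, -, h₁, h₂⟩
  have := mul_fst_eq_of_mem_curves h₁ h₂
  rw [hA, hB] at this
  simp [ha, hc, sub_eq_zero, hac, hy] at this

theorem encard_nonzeroMeet_le_of_ne (ha : a ≠ 0) (hc : c ≠ 0) (hac : a ≠ c)
    (hab : a ^ 3 ≠ b ^ 3) : (nonzeroMeet a b c d).encard ≤ 3 := by
  by_cases hAB : c * b - a * d = 0 ∧ c * b ^ 2 - a * d ^ 2 = 0
  · simp [nonzeroMeet_eq_empty ha hc hac hAB.1 hAB.2]
  have he : a * c * (a - c) ≠ 0 := mul_ne_zero (mul_ne_zero ha hc) (sub_ne_zero.mpr hac)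
  refine Cubic.encard_le_three_of_subset_image (eliminant_toPoly_ne_zero ha hc hac hab hAB)
    (g := fun t => (((c * b - a * d) * t ^ 2 + (c * b ^ 2 - a * d ^ 2) * t) / (a * c * (a - c)), t))
    ?_
  rintro ⟨y, t⟩ ⟨-, ht, h₁, h₂⟩
  refine ⟨t, eliminant_eval_eq_zero ht h₁ h₂, ?_⟩
  rw [← mul_fst_eq_of_mem_curves h₁ h₂, mul_div_cancel_left₀ _ he]

end Elimination

/-- Two distinct curves `γ_{a,b}` and `γ_{c,d}` with `a³ ≠ b³` and `c³ ≠ d³` meet in at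
most three points with both coordinates nonzero. -/
theorem stmt_19 (a b c d : ℝ) (hne : (a, b) ≠ (c, d)) (hab : a ^ 3 ≠ b ^ 3)
    (hcd : c ^ 3 ≠ d ^ 3) :
    {yy : ℝ × ℝ | yy.1 ≠ 0 ∧ yy.2 ≠ 0 ∧
        a * yy.1 ^ 2 + a ^ 2 * yy.1 = b * yy.2 ^ 2 + b ^ 2 * yy.2 ∧
        c * yy.1 ^ 2 + c ^ 2 * yy.1 = d * yy.2 ^ 2 + d ^ 2 * yy.2}.Finite ∧
    Set.ncard {yy : ℝ × ℝ | yy.1 ≠ 0 ∧ yy.2 ≠ 0 ∧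
        a * yy.1 ^ 2 + a ^ 2 * yy.1 = b * yy.2 ^ 2 + b ^ 2 * yy.2 ∧
        c * yy.1 ^ 2 + c ^ 2 * yy.1 = d * yy.2 ^ 2 + d ^ 2 * yy.2} ≤ 3 := by
  rw [← Set.encard_le_coe_iff_finite_ncard_le]
  change (nonzeroMeet a b c d).encard ≤ 3
  have hcube_ne {x z : ℝ} (h : x ^ 3 ≠ z ^ 3) : (x, z) ≠ (0, 0) := by
    rintro ⟨⟩
    exact h rfl
  rcases eq_or_ne a 0 with rfl | ha
  · exact encard_nonzeroMeet_zero_left_le (by simpa [eq_comm] using hab) (hcube_ne hcd) hne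
  rcases eq_or_ne c 0 with rfl | hc
  · rw [nonzeroMeet_comm]
    exact encard_nonzeroMeet_zero_left_le (by simpa [eq_comm] using hcd) (hcube_ne hab) hne.symm
  rcases eq_or_ne a c with rfl | hac
  · exact encard_nonzeroMeet_same_left_le ha (by simpa using hne)
  exact encard_nonzeroMeet_le_of_ne ha hc hac hab
end
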